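/- arXiv:1806.07278 — 8 statements merged into one kernel-verified Lean document; each statement's English description precedes it below -/
import Mathlib

section
/- Let $\Omega$ be a finite sample space, let $p_1,\dots,p_t$ and $q_1,\dots,q_l$ be probability distributions on $\Omega$, and let $\epsilon_{ij}\in[0,1]$ for $i\in[t]$, $j\in[l]$. Then there exists a function $f:\Omega\to[0,1]$ such that (1) for all $i\in[t]$, $\sum_{\omega} p_i(\omega) f(\omega) \ge 1 - \sum_{j=1}^l \epsilon_{ij}$, and (2) for all $j\in[l]$, $\sum_{\omega} q_j(\omega) f(\omega) \le \sum_{i=1}^t 2^{-D_H^{\epsilon_{ij}}(p_i\|q_j)}$. -/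
/-!
For each pair `(i, j)` compactness of the space of tests gives a test `F i j` of `p i`-mass at
least `1 - ε i j` whose `q j`-mass is minimal, and that minimum is at most `2 ^ (-D_H)`.
The test `f = ⋃ i, ⋂ j, F i j` works: `1 - min_j F i j ≤ ∑ j, (1 - F i j)` pointwise is a union
bound giving (1), and `max_i ≤ ∑ i` together with `min_j F i j ≤ F i j` gives (2). Tests are taken
with values in `unitInterval`, where `∩` and `∪` are the lattice operations `⊓` and `⊔`.
-/

open Finset

/-- Classical hypothesis testing relative entropy `D_H^ε(p‖q)` on a finite sample space. -/
noncomputable def DHc {Ω : Type*} [Fintype Ω] (p q : Ω → ℝ) (ε : ℝ) : ℝ :=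
  sSup {x : ℝ | ∃ f : Ω → ℝ, (∀ ω, 0 ≤ f ω ∧ f ω ≤ 1) ∧
    1 - ε ≤ ∑ ω, f ω * p ω ∧ x = -Real.logb 2 (∑ ω, f ω * q ω)}

open unitInterval

section Lattice

variable {ι : Type*} (s : Finset ι)

theorem one_sub_coe_finset_inf_le_sum (x : ι → I) :
    1 - (↑(s.inf x) : ℝ) ≤ ∑ j ∈ s, (1 - (x j : ℝ)) := by
  classical
  induction s using Finset.induction_on with
  | empty => simp
  | insert a s ha ih =>
    rw [inf_insert, sum_insert ha, Set.Icc.coe_inf]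
    have := (x a).2.2
    have := (s.inf x).2.2
    rcases min_choice (x a : ℝ) ↑(s.inf x) with h | h <;> rw [h] <;> linarith

theorem coe_finset_sup_le_sum (x : ι → I) : (↑(s.sup x) : ℝ) ≤ ∑ i ∈ s, (x i : ℝ) := by
  classical
  induction s using Finset.induction_on with
  | empty => simp
  | insert a s ha ih =>
    rw [sup_insert, sum_insert ha, Set.Icc.coe_sup]
    have := (x a).2.1
    have := (s.sup x).2.1
    exact max_le (by linarith) (by linarith)

variable {Ω : Type*} [Fintype Ω]

theorem one_sub_sum_le_sum_mul_finset_inf {p : Ω → ℝ} (hp₀ : ∀ ω, 0 ≤ p ω)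
    (hp₁ : ∑ ω, p ω = 1) (F : ι → Ω → I) :
    1 - ∑ j ∈ s, (1 - ∑ ω, p ω * F j ω) ≤ ∑ ω, p ω * (s.inf F ω : ℝ) := by
  calc 1 - ∑ j ∈ s, (1 - ∑ ω, p ω * F j ω)
      = 1 - ∑ j ∈ s, ∑ ω, p ω * (1 - (F j ω : ℝ)) := by
        simp only [mul_sub, mul_one, sum_sub_distrib, hp₁]
    _ = 1 - ∑ ω, p ω * ∑ j ∈ s, (1 - (F j ω : ℝ)) := by
        simp only [mul_sum]
        rw [sum_comm]
    _ ≤ 1 - ∑ ω, p ω * (1 - (s.inf F ω : ℝ)) := by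
        gcongr with ω
        · exact hp₀ ω
        · rw [Finset.inf_apply]
          exact one_sub_coe_finset_inf_le_sum s _
    _ = ∑ ω, p ω * (s.inf F ω : ℝ) := by simp [mul_sub, sum_sub_distrib, hp₁]

theorem sum_mul_finset_sup_le_sum {q : Ω → ℝ} (hq₀ : ∀ ω, 0 ≤ q ω) (g : ι → Ω → I) :
    ∑ ω, q ω * (s.sup g ω : ℝ) ≤ ∑ i ∈ s, ∑ ω, q ω * g i ω := by
  rw [sum_comm]
  gcongr with ω
  rw [← mul_sum, Finset.sup_apply]
  exact mul_le_mul_of_nonneg_left (coe_finset_sup_le_sum s _) (hq₀ ω)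

end Lattice

section HypothesisTesting

variable {Ω : Type*} [Fintype Ω] {p q : Ω → ℝ} {ε : ℝ}

theorem exists_isMinOn_sum_mul (hε : 1 - ε ≤ ∑ ω, p ω) :
    ∃ f ∈ {g : Ω → I | 1 - ε ≤ ∑ ω, (g ω : ℝ) * p ω},
      IsMinOn (fun g : Ω → I => ∑ ω, (g ω : ℝ) * q ω) {g | 1 - ε ≤ ∑ ω, (g ω : ℝ) * p ω} f := by
  have hclosed : IsClosed {g : Ω → I | 1 - ε ≤ ∑ ω, (g ω : ℝ) * p ω} :=
    isClosed_le continuous_const (by fun_prop)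
  exact hclosed.isCompact.exists_isMinOn ⟨1, by simpa using hε⟩ (by fun_prop)

theorem sum_mul_le_rpow_neg_DHc (hq : ∀ ω, 0 ≤ q ω) {f : Ω → I}
    (hfp : 1 - ε ≤ ∑ ω, (f ω : ℝ) * p ω)
    (hmin : ∀ g : Ω → I, 1 - ε ≤ ∑ ω, (g ω : ℝ) * p ω →
      ∑ ω, (f ω : ℝ) * q ω ≤ ∑ ω, (g ω : ℝ) * q ω) :
    ∑ ω, (f ω : ℝ) * q ω ≤ 2 ^ (-DHc p q ε) := by
  set m := ∑ ω, (f ω : ℝ) * q ω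
  have hm₀ : 0 ≤ m := sum_nonneg fun ω _ => mul_nonneg (f ω).2.1 (hq ω)
  rcases hm₀.eq_or_lt with hm | hm
  · rw [← hm]
    positivity
  have hD : DHc p q ε ≤ -Real.logb 2 m := by
    refine csSup_le ⟨_, fun ω => f ω, fun ω => (f ω).2, hfp, rfl⟩ ?_
    rintro _ ⟨g, hg, hgp, rfl⟩
    exact neg_le_neg (Real.logb_le_logb_of_le one_lt_two hm (hmin (fun ω => ⟨g ω, hg ω⟩) hgp))
  calc m = 2 ^ Real.logb 2 m := (Real.rpow_logb two_pos (by norm_num) hm).symm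
    _ ≤ 2 ^ (-DHc p q ε) := Real.rpow_le_rpow_of_exponent_le one_le_two (by linarith)

theorem exists_test_le_rpow_neg_DHc (hε : 1 - ε ≤ ∑ ω, p ω) (hq : ∀ ω, 0 ≤ q ω) :
    ∃ f : Ω → I, 1 - ε ≤ ∑ ω, p ω * f ω ∧ ∑ ω, q ω * f ω ≤ 2 ^ (-DHc p q ε) := by
  obtain ⟨f, hfp : 1 - ε ≤ _, hmin⟩ := exists_isMinOn_sum_mul (q := q) hε
  refine ⟨f, ?_, ?_⟩
  · simpa only [mul_comm] using hfp
  · simpa only [mul_comm] using sum_mul_le_rpow_neg_DHc hq hfp fun g hg => hmin hg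

end HypothesisTesting

/-- Classical joint typicality lemma. -/
theorem stmt0 {Ω : Type*} [Fintype Ω] (t l : ℕ)
    (p : Fin t → Ω → ℝ) (hp : ∀ i, (∀ ω, 0 ≤ p i ω) ∧ ∑ ω, p i ω = 1)
    (q : Fin l → Ω → ℝ) (hq : ∀ j, (∀ ω, 0 ≤ q j ω) ∧ ∑ ω, q j ω = 1)
    (ε : Fin t → Fin l → ℝ) (hε : ∀ i j, 0 ≤ ε i j ∧ ε i j ≤ 1) :
    ∃ f : Ω → ℝ, (∀ ω, 0 ≤ f ω ∧ f ω ≤ 1) ∧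
      (∀ i, 1 - ∑ j, ε i j ≤ ∑ ω, p i ω * f ω) ∧
      (∀ j, ∑ ω, q j ω * f ω ≤ ∑ i, (2 : ℝ) ^ (-(DHc (p i) (q j) (ε i j)))) := by
  choose F hFp hFq using fun i j =>
    exists_test_le_rpow_neg_DHc (p := p i) (q := q j) (ε := ε i j)
      (by linarith [(hp i).2, (hε i j).1]) (hq j).1
  set f : Ω → I := univ.sup fun i => univ.inf (F i)
  refine ⟨fun ω => f ω, fun ω => (f ω).2, fun i => ?_, fun j => ?_⟩
  · calc 1 - ∑ j, ε i j ≤ 1 - ∑ j, (1 - ∑ ω, p i ω * F i j ω) := by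
          gcongr with j
          linarith [hFp i j]
      _ ≤ ∑ ω, p i ω * (univ.inf (F i) ω : ℝ) :=
          one_sub_sum_le_sum_mul_finset_inf _ (hp i).1 (hp i).2 _
      _ ≤ ∑ ω, p i ω * f ω := by
          gcongr with ω
          · exact (hp i).1 ω
          · exact le_sup (f := fun i => univ.inf (F i)) (mem_univ i) ω
  · calc ∑ ω, q j ω * f ω ≤ ∑ i, ∑ ω, q j ω * (univ.inf (F i) ω : ℝ) :=
          sum_mul_finset_sup_le_sum _ (hq j).1 _
      _ ≤ ∑ i, ∑ ω, q j ω * F i j ω := by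
          gcongr with i _ ω
          · exact (hq j).1 ω
          · exact inf_le (f := F i) (mem_univ j) ω
      _ ≤ _ := sum_le_sum fun i _ => hFq i j
end

section
/- Let $\mathcal{H}$ be a finite-dimensional Hilbert space, $l$ a positive integer, and $\tilde{\mathcal{H}} = \mathcal{H} \oplus \mathcal{H}_1 \oplus \cdots \oplus \mathcal{H}_l$ where each $\mathcal{H}_j$ is a copy of $\mathcal{H}$ via an isometry $\mathcal{T}_j:\mathcal{H}\to\mathcal{H}_j$. For $0<\alpha_j<1$ define $\mathcal{T}_{j,\alpha_j} := \sqrt{1-\alpha_j}\,\iota + \sqrt{\alpha_j}\,\mathcal{T}_j$ where $\iota$ is the inclusion of $\mathcal{H}$ into $\tilde{\mathcal{H}}$. Let $W_1,\dots,W_l \le \mathcal{H}$ be subspaces, let $\mathbf{W} := \sum_{j=1}^l \mathcal{T}_{j,\alpha_j}(W_j)$ (sum of subspaces in $\tilde{\mathcal{H}}$), let $|h\rangle\in\mathcal{H}$ be a unit vector, let $\epsilon_j := \|\Pi_{W_j}|h\rangle\|_2^2$, and let $\alpha := \min_j \alpha_j$. Then $\max_{j\in[l]} (1-\alpha_j)\epsilon_j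 \le \|\Pi_{\mathbf{W}}|h\rangle\|_2^2 \le \frac{1-\alpha}{\alpha}\sum_{j=1}^l \epsilon_j$. -/
/-!
Write `x := Π_K (emb h)` for the tilted span `K` as `x = ∑ⱼ 𝒯_{j,αⱼ} wⱼ` with `wⱼ ∈ Wⱼ`. The
components of `x` along the mutually orthogonal copies `𝒯ⱼ` give `‖x‖² ≥ α ∑ ‖wⱼ‖²`, while
`‖x‖² = Re ⟪x, emb h⟫ = ∑ √(1-αⱼ) Re ⟪wⱼ, Π_{Wⱼ} h⟫`, which Cauchy–Schwarz bounds by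
`√(∑ (1-αⱼ) εⱼ) · √(∑ ‖wⱼ‖²)`; combining the two gives the upper bound. For the lower bound,
`𝒯_{j,αⱼ}` is an isometry, so testing `x` against `𝒯_{j,αⱼ} Π_{Wⱼ} h ∈ K`, whose inner product
with `emb h` is `√(1-αⱼ) ‖Π_{Wⱼ} h‖²`, gives `√(1-αⱼ) ‖Π_{Wⱼ} h‖ ≤ ‖x‖`.
-/

open scoped InnerProductSpace
open Finset RCLike

section Projection

variable {𝕜 E : Type*} [RCLike 𝕜] [NormedAddCommGroup E] [InnerProductSpace 𝕜 E]
  (K : Submodule 𝕜 E) [K.HasOrthogonalProjection]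

theorem Submodule.inner_starProjection_right_of_mem {w : E} (hw : w ∈ K) (v : E) :
    ⟪w, K.starProjection v⟫_𝕜 = ⟪w, v⟫_𝕜 := by
  rw [← inner_starProjection_left_eq_right, K.starProjection_eq_self_iff.mpr hw]

theorem Submodule.norm_inner_le_norm_mul_norm_starProjection {w : E} (hw : w ∈ K) (v : E) :
    ‖⟪w, v⟫_𝕜‖ ≤ ‖w‖ * ‖K.starProjection v‖ :=
  K.inner_starProjection_right_of_mem hw v ▸ norm_inner_le_norm _ _

theorem Submodule.re_inner_starProjection_self (v : E) :
    re ⟪K.starProjection v, v⟫_𝕜 = ‖K.starProjection v‖ ^ 2 :=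
  K.re_inner_starProjection_eq_normSq v

end Projection

theorem Submodule.exists_sum_eq_of_mem_iSup_map {R M N ι : Type*} [Semiring R]
    [AddCommMonoid M] [Module R M] [AddCommMonoid N] [Module R N] [Fintype ι]
    {f : ι → M →ₗ[R] N} {W : ι → Submodule R M} {x : N} (hx : x ∈ ⨆ i, (W i).map (f i)) :
    ∃ w : ι → M, (∀ i, w i ∈ W i) ∧ ∑ i, f i (w i) = x := by
  obtain ⟨c, hc, rfl⟩ := (Submodule.mem_iSup_iff_exists_finsupp _ x).1 hx
  choose w hw hwc using fun i => Submodule.mem_map.1 (hc i)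
  refine ⟨w, hw, ?_⟩
  rw [Finsupp.sum_fintype _ _ fun _ => rfl]
  exact sum_congr rfl fun i _ => hwc i

theorem le_div_of_le_sqrt_mul_sqrt {N A S a : ℝ} (ha : 0 < a) (hA : 0 ≤ A)
    (hN : N ≤ √A * √S) (hS : a * S ≤ N) : N ≤ A / a := by
  rcases le_or_gt N 0 with hN₀ | hN₀
  · exact hN₀.trans (by positivity)
  have hNsq : N ^ 2 ≤ A * S := (Real.le_sqrt' hN₀).1 (Real.sqrt_mul hA S ▸ hN)
  have : N * (a * N) ≤ N * A := by nlinarith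
  rw [le_div_iff₀ ha, mul_comm]
  exact le_of_mul_le_mul_left this hN₀

section Tilt

variable {𝕜 H E : Type*} [RCLike 𝕜] [NormedAddCommGroup H] [InnerProductSpace 𝕜 H]
  [NormedAddCommGroup E] [InnerProductSpace 𝕜 E]

noncomputable def tiltedMap (emb T : H →ₗᵢ[𝕜] E) (a : ℝ) : H →ₗ[𝕜] E :=
  ((√(1 - a) : ℝ) : 𝕜) • emb.toLinearMap + ((√a : ℝ) : 𝕜) • T.toLinearMap

variable {emb : H →ₗᵢ[𝕜] E}

theorem tiltedMap_apply (T : H →ₗᵢ[𝕜] E) (a : ℝ) (u : H) :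
    tiltedMap emb T a u = ((√(1 - a) : ℝ) : 𝕜) • emb u + ((√a : ℝ) : 𝕜) • T u := rfl

theorem inner_tiltedMap_left {T : H →ₗᵢ[𝕜] E} (horth : ∀ u v, ⟪emb u, T v⟫_𝕜 = 0) (a : ℝ)
    (u v : H) : ⟪tiltedMap emb T a u, emb v⟫_𝕜 = ((√(1 - a) : ℝ) : 𝕜) * ⟪u, v⟫_𝕜 := by
  rw [tiltedMap_apply, inner_add_left, inner_smul_left, inner_smul_left,
    inner_eq_zero_symm.1 (horth v u), LinearIsometry.inner_map_map, conj_ofReal, mul_zero,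
    add_zero]

theorem norm_tiltedMap {T : H →ₗᵢ[𝕜] E} (horth : ∀ u v, ⟪emb u, T v⟫_𝕜 = 0) {a : ℝ}
    (ha₀ : 0 ≤ a) (ha₁ : a ≤ 1) (u : H) : ‖tiltedMap emb T a u‖ = ‖u‖ := by
  have hcross : ⟪((√(1 - a) : ℝ) : 𝕜) • emb u, ((√a : ℝ) : 𝕜) • T u⟫_𝕜 = 0 := by
    rw [inner_smul_left, inner_smul_right, horth, mul_zero, mul_zero]
  have hsq := norm_add_sq_eq_norm_sq_add_norm_sq_of_inner_eq_zero _ _ hcross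
  simp only [norm_smul, norm_ofReal, abs_of_nonneg (Real.sqrt_nonneg _),
    LinearIsometry.norm_map] at hsq
  refine (sq_eq_sq₀ (norm_nonneg _) (norm_nonneg _)).1 ?_
  rw [tiltedMap_apply, sq, hsq]
  nlinarith [Real.mul_self_sqrt (sub_nonneg.2 ha₁), Real.mul_self_sqrt ha₀]

theorem mul_sq_norm_starProjection_le {T : H →ₗᵢ[𝕜] E} (horth : ∀ u v, ⟪emb u, T v⟫_𝕜 = 0)
    {a : ℝ} (ha₀ : 0 ≤ a) (ha₁ : a ≤ 1) {W : Submodule 𝕜 H} [W.HasOrthogonalProjection]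
    {K : Submodule 𝕜 E} [K.HasOrthogonalProjection] (hWK : W.map (tiltedMap emb T a) ≤ K)
    (h : H) : (1 - a) * ‖W.starProjection h‖ ^ 2 ≤ ‖K.starProjection (emb h)‖ ^ 2 := by
  set p := W.starProjection h
  set X := ‖K.starProjection (emb h)‖
  have key : ‖p‖ * (√(1 - a) * ‖p‖) ≤ ‖p‖ * X :=
    calc ‖p‖ * (√(1 - a) * ‖p‖) = re ⟪tiltedMap emb T a p, emb h⟫_𝕜 := by
          rw [inner_tiltedMap_left horth, re_ofReal_mul, W.re_inner_starProjection_self]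
          ring
      _ ≤ ‖⟪tiltedMap emb T a p, emb h⟫_𝕜‖ := re_le_norm _
      _ ≤ ‖tiltedMap emb T a p‖ * X := K.norm_inner_le_norm_mul_norm_starProjection
          (hWK (Submodule.mem_map_of_mem (W.starProjection_apply_mem h))) _
      _ = ‖p‖ * X := by rw [norm_tiltedMap horth ha₀ ha₁]
  rcases (norm_nonneg p).eq_or_lt with hp | hp
  · rw [← hp, zero_pow two_ne_zero, mul_zero]
    positivity
  calc (1 - a) * ‖p‖ ^ 2 = (√(1 - a) * ‖p‖) ^ 2 := by
        rw [mul_pow, Real.sq_sqrt (sub_nonneg.2 ha₁)]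
    _ ≤ X ^ 2 := pow_le_pow_left₀ (by positivity) (le_of_mul_le_mul_left key hp) 2

variable {ι : Type*} [Fintype ι] {T : ι → H →ₗᵢ[𝕜] E} {α : ι → ℝ}

theorem sum_tiltedMap (w : ι → H) :
    ∑ j, tiltedMap emb (T j) (α j) (w j)
      = emb (∑ j, ((√(1 - α j) : ℝ) : 𝕜) • w j) + ∑ j, T j (((√(α j) : ℝ) : 𝕜) • w j) := by
  simp only [tiltedMap_apply, map_sum, map_smul, sum_add_distrib]

theorem sum_mul_sq_norm_le_sq_norm_sum_tiltedMap (horth : ∀ j u v, ⟪emb u, T j v⟫_𝕜 = 0)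
    (hT : OrthogonalFamily 𝕜 (fun _ => H) T) (hα : ∀ j, 0 ≤ α j) (w : ι → H) :
    ∑ j, α j * ‖w j‖ ^ 2 ≤ ‖∑ j, tiltedMap emb (T j) (α j) (w j)‖ ^ 2 := by
  have hcross : ⟪emb (∑ j, ((√(1 - α j) : ℝ) : 𝕜) • w j),
      ∑ j, T j (((√(α j) : ℝ) : 𝕜) • w j)⟫_𝕜 = 0 := by
    rw [inner_sum]
    exact sum_eq_zero fun j _ => horth j _ _
  have hsq := norm_add_sq_eq_norm_sq_add_norm_sq_of_inner_eq_zero _ _ hcross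
  have hT_sq : ‖∑ j, T j (((√(α j) : ℝ) : 𝕜) • w j)‖ ^ 2 = ∑ j, α j * ‖w j‖ ^ 2 := by
    rw [hT.norm_sum]
    refine sum_congr rfl fun j _ => ?_
    rw [norm_smul, norm_ofReal, abs_of_nonneg (Real.sqrt_nonneg _), mul_pow,
      Real.sq_sqrt (hα j)]
  rw [sum_tiltedMap, sq, hsq, ← sq, ← sq, hT_sq]
  exact le_add_of_nonneg_left (sq_nonneg _)

theorem re_inner_sum_tiltedMap_le (horth : ∀ j u v, ⟪emb u, T j v⟫_𝕜 = 0) (hα : ∀ j, α j ≤ 1)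
    {W : ι → Submodule 𝕜 H} [∀ j, (W j).HasOrthogonalProjection] {w : ι → H}
    (hw : ∀ j, w j ∈ W j) (h : H) :
    re ⟪∑ j, tiltedMap emb (T j) (α j) (w j), emb h⟫_𝕜
      ≤ √(∑ j, (1 - α j) * ‖(W j).starProjection h‖ ^ 2) * √(∑ j, ‖w j‖ ^ 2) := by
  have hterm : ∀ j, re ⟪tiltedMap emb (T j) (α j) (w j), emb h⟫_𝕜
      ≤ √((1 - α j) * ‖(W j).starProjection h‖ ^ 2) * ‖w j‖ := fun j =>
    calc re ⟪tiltedMap emb (T j) (α j) (w j), emb h⟫_𝕜 = √(1 - α j) * re ⟪w j, h⟫_𝕜 := by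
          rw [inner_tiltedMap_left (horth j), re_ofReal_mul]
      _ ≤ √(1 - α j) * (‖w j‖ * ‖(W j).starProjection h‖) := by
          gcongr
          exact (re_le_norm _).trans
            ((W j).norm_inner_le_norm_mul_norm_starProjection (hw j) h)
      _ = √((1 - α j) * ‖(W j).starProjection h‖ ^ 2) * ‖w j‖ := by
          rw [Real.sqrt_mul (sub_nonneg.2 (hα j)), Real.sqrt_sq (norm_nonneg _)]
          ring
  calc re ⟪∑ j, tiltedMap emb (T j) (α j) (w j), emb h⟫_𝕜
      = ∑ j, re ⟪tiltedMap emb (T j) (α j) (w j), emb h⟫_𝕜 := by rw [sum_inner, map_sum]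
    _ ≤ ∑ j, √((1 - α j) * ‖(W j).starProjection h‖ ^ 2) * ‖w j‖ := sum_le_sum fun j _ => hterm j
    _ ≤ _ := by
      refine (Real.sum_mul_le_sqrt_mul_sqrt _ _ _).trans_eq ?_
      congr 2
      exact sum_congr rfl fun j _ =>
        Real.sq_sqrt (mul_nonneg (sub_nonneg.2 (hα j)) (sq_nonneg _))

end Tilt

theorem stmt2_general {H E : Type*}
    [NormedAddCommGroup H] [InnerProductSpace ℂ H] [FiniteDimensional ℂ H]
    [NormedAddCommGroup E] [InnerProductSpace ℂ E] [FiniteDimensional ℂ E]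
    {l : ℕ} (hl : 0 < l)
    (emb : H →ₗᵢ[ℂ] E) (T : Fin l → (H →ₗᵢ[ℂ] E))
    (horth1 : ∀ j, ∀ u v : H, (inner ℂ (emb u) (T j v) : ℂ) = 0)
    (horth2 : ∀ i j, i ≠ j → ∀ u v : H, (inner ℂ (T i u) (T j v) : ℂ) = 0)
    (α : Fin l → ℝ) (hα : ∀ j, 0 < α j ∧ α j < 1)
    (W : Fin l → Submodule ℂ H)
    (h : H)
    (Tα : Fin l → (H →ₗ[ℂ] E))
    (hTα : ∀ j, Tα j = (Complex.ofReal (Real.sqrt (1 - α j))) • emb.toLinearMap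
        + (Complex.ofReal (Real.sqrt (α j))) • (T j).toLinearMap)
    (Wbig : Submodule ℂ E) (hWbig : Wbig = ⨆ j, (W j).map (Tα j))
    (ε : Fin l → ℝ) (hε : ∀ j, ε j = ‖(Submodule.orthogonalProjection (W j) h : H)‖ ^ 2)
    (αmin : ℝ) (hαmin : αmin = ⨅ j, α j) :
    (∀ j, (1 - α j) * ε j ≤ ‖(Submodule.orthogonalProjection Wbig (emb h) : E)‖ ^ 2) ∧
    ‖(Submodule.orthogonalProjection Wbig (emb h) : E)‖ ^ 2 ≤ (1 - αmin) / αmin * ∑ j, ε j := by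
  obtain rfl : Tα = fun j => tiltedMap emb (T j) (α j) := funext hTα
  obtain rfl : ε = fun j => ‖(W j).starProjection h‖ ^ 2 := funext hε
  subst hWbig
  simp only [Submodule.coe_orthogonalProjectionOnto_apply]
  refine ⟨fun j => mul_sq_norm_starProjection_le (horth1 j) (hα j).1.le (hα j).2.le
    (le_iSup (fun j => (W j).map (tiltedMap emb (T j) (α j))) j) h, ?_⟩
  have : Nonempty (Fin l) := ⟨⟨0, hl⟩⟩
  obtain ⟨j₀, hj₀⟩ := exists_eq_ciInf_of_finite (f := α)
  have hαmin_le : ∀ j, αmin ≤ α j := fun j => hαmin ▸ ciInf_le (Finite.bddBelow_range α) j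
  set K := ⨆ j, (W j).map (tiltedMap emb (T j) (α j))
  obtain ⟨w, hw, hx⟩ := Submodule.exists_sum_eq_of_mem_iSup_map (K.starProjection_apply_mem (emb h))
  have hupper := re_inner_sum_tiltedMap_le horth1 (fun j => (hα j).2.le) hw h
  have hlower := sum_mul_sq_norm_le_sq_norm_sum_tiltedMap horth1 horth2 (fun j => (hα j).1.le) w
  rw [hx, K.re_inner_starProjection_self] at hupper
  rw [hx] at hlower
  have hαmin_pos : 0 < αmin := hαmin ▸ hj₀ ▸ (hα j₀).1
  have hε_le : ∑ j, (1 - α j) * ‖(W j).starProjection h‖ ^ 2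
      ≤ (1 - αmin) * ∑ j, ‖(W j).starProjection h‖ ^ 2 := by
    rw [mul_sum]
    exact sum_le_sum fun j _ => by gcongr; exact hαmin_le j
  have hw_le : αmin * ∑ j, ‖w j‖ ^ 2 ≤ ‖K.starProjection (emb h)‖ ^ 2 := by
    rw [mul_sum]
    exact (sum_le_sum fun j _ => by gcongr; exact hαmin_le j).trans hlower
  rw [div_mul_eq_mul_div]
  exact le_div_of_le_sqrt_mul_sqrt hαmin_pos
    (mul_nonneg (by linarith [(hα j₀).2]) (sum_nonneg fun j _ => sq_nonneg _))
    (hupper.trans (by gcongr)) hw_le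

/-- Tilted span of subspaces (Proposition: union bound for the tilted span).
`H` is embedded isometrically in `E` via `emb`, and `T j : H → E` are isometries
onto mutually orthogonal subspaces orthogonal to the image of `emb`.
`Tα j = √(1-αⱼ) emb + √αⱼ T j` and `Wbig` is the `(α₁,…,α_l)`-tilted span. -/
theorem stmt2 {H E : Type*}
    [NormedAddCommGroup H] [InnerProductSpace ℂ H] [FiniteDimensional ℂ H]
    [NormedAddCommGroup E] [InnerProductSpace ℂ E] [FiniteDimensional ℂ E]
    {l : ℕ} (hl : 0 < l)
    (emb : H →ₗᵢ[ℂ] E) (T : Fin l → (H →ₗᵢ[ℂ] E))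
    (horth1 : ∀ j, ∀ u v : H, (inner ℂ (emb u) (T j v) : ℂ) = 0)
    (horth2 : ∀ i j, i ≠ j → ∀ u v : H, (inner ℂ (T i u) (T j v) : ℂ) = 0)
    (α : Fin l → ℝ) (hα : ∀ j, 0 < α j ∧ α j < 1)
    (W : Fin l → Submodule ℂ H)
    (h : H) (hh : ‖h‖ = 1)
    (Tα : Fin l → (H →ₗ[ℂ] E))
    (hTα : ∀ j, Tα j = (Complex.ofReal (Real.sqrt (1 - α j))) • emb.toLinearMap
        + (Complex.ofReal (Real.sqrt (α j))) • (T j).toLinearMap)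
    (Wbig : Submodule ℂ E) (hWbig : Wbig = ⨆ j, (W j).map (Tα j))
    (ε : Fin l → ℝ) (hε : ∀ j, ε j = ‖(Submodule.orthogonalProjection (W j) h : H)‖ ^ 2)
    (αmin : ℝ) (hαmin : αmin = ⨅ j, α j) :
    (∀ j, (1 - α j) * ε j ≤ ‖(Submodule.orthogonalProjection Wbig (emb h) : E)‖ ^ 2) ∧
    ‖(Submodule.orthogonalProjection Wbig (emb h) : E)‖ ^ 2 ≤ (1 - αmin) / αmin * ∑ j, ε j :=
  stmt2_general hl emb T horth1 horth2 α hα W h Tα hTα Wbig hWbig ε hε αmin hαmin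
end

section
/- With notation as in the tilted span setting: let $|h\rangle\in\mathcal{H}$ be a unit vector, $W_0,W_1,\dots,W_l$ subspaces of $\mathcal{H}$, $\epsilon_j := \|\Pi_{W_j}|h\rangle\|_2^2$ for $0\le j\le l$, and $0<\alpha<1/3$. Let $\mathbf{W}_\alpha := \sum_{j=1}^l \mathcal{T}_{j,\alpha}(W_j)$ be the $\alpha$-tilted span, define $\mathbf{W} := \mathbf{W}_\alpha + W_0$ and $\epsilon := \frac{1-\alpha}{\alpha}\sum_{j=1}^l\epsilon_j$. Then $\max\{\epsilon_0,\ (1-\alpha)\max_{1\le j\le l}\epsilon_j\} \le \|\Pi_{\mathbf{W}}|h\rangle\|_2^2 \le \frac{3l}{\alpha}(\epsilon_0+\epsilon)$. -/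
private lemma sqrtCS (a b c d : ℝ) (ha : 0 ≤ a) (hb : 0 ≤ b) (hc : 0 ≤ c) (hd : 0 ≤ d) :
    (Real.sqrt a * Real.sqrt b + Real.sqrt c * Real.sqrt d)^2 ≤ (a + c) * (b + d) := by
  have h1 := Real.sq_sqrt ha
  have h2 := Real.sq_sqrt hb
  have h3 := Real.sq_sqrt hc
  have h4 := Real.sq_sqrt hd
  nlinarith [sq_nonneg (Real.sqrt a * Real.sqrt d - Real.sqrt c * Real.sqrt b),
    Real.sqrt_nonneg a, Real.sqrt_nonneg b, Real.sqrt_nonneg c, Real.sqrt_nonneg d,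
    mul_nonneg (Real.sqrt_nonneg a) (Real.sqrt_nonneg b),
    mul_nonneg (Real.sqrt_nonneg c) (Real.sqrt_nonneg d)]

private lemma aux_sd (t U R Sg G N2 l' : ℝ) (htU : t ≤ U + R * Sg)
    (ht0 : 0 ≤ t) (hR : 0 ≤ R) (hSg : 0 ≤ Sg)
    (hsq : Sg^2 ≤ l' * G) (hU2 : U^2 ≤ N2) :
    t^2 ≤ 2 * N2 + 2 * R^2 * (l' * G) := by
  have h1 : t^2 ≤ (U + R*Sg)^2 := by nlinarith [mul_nonneg hR hSg]
  nlinarith [sq_nonneg (U - R*Sg), sq_nonneg R,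
    mul_le_mul_of_nonneg_left hsq (by positivity : (0:ℝ) ≤ 2*R^2)]

private lemma aux_bd (α l G u2 sd : ℝ) (hα0 : 0 < α) (hα1 : α < 1/3) (hl1 : 1 ≤ l)
    (hG : 0 ≤ G) (hu2 : 0 ≤ u2)
    (hsd : sd ≤ 2 * (u2 + α * G) + 2 * (1-α) * (l * G)) :
    (1-α) * G + sd ≤ 3 * l / α * (u2 + α * G) := by
  rw [div_mul_eq_mul_div, le_div_iff₀ hα0]
  have h1 : (0:ℝ) ≤ (α*G) * ((l-1) + α*(2*l-1)) :=
    mul_nonneg (mul_nonneg hα0.le hG) (by nlinarith)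
  have h2 : (0:ℝ) ≤ u2 * (3*l - 2*α) := mul_nonneg hu2 (by nlinarith)
  have h3 := mul_le_mul_of_nonneg_right hsd hα0.le
  nlinarith [h1, h2, h3]

private lemma orthogonalProjection_inner_eq_zero {𝕜 E : Type*} [RCLike 𝕜] [NormedAddCommGroup E]
    [InnerProductSpace 𝕜 E] {K : Submodule 𝕜 E} [K.HasOrthogonalProjection] (v w : E)
    (hw : w ∈ K) : inner 𝕜 (v - (K.orthogonalProjection v : E)) w = 0 :=
  K.starProjection_inner_eq_zero v w hw

set_option maxHeartbeats 1000000 in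
/-- Corollary of the tilted-span proposition: bound for the span of the
`α`-tilted span `W_α` together with an untilted subspace `W₀`. -/
theorem stmt3 {H E : Type*}
    [NormedAddCommGroup H] [InnerProductSpace ℂ H] [FiniteDimensional ℂ H]
    [NormedAddCommGroup E] [InnerProductSpace ℂ E] [FiniteDimensional ℂ E]
    {l : ℕ} (hl : 0 < l)
    (emb : H →ₗᵢ[ℂ] E) (T : Fin l → (H →ₗᵢ[ℂ] E))
    (horth1 : ∀ j, ∀ u v : H, (inner ℂ (emb u) (T j v) : ℂ) = 0)
    (horth2 : ∀ i j, i ≠ j → ∀ u v : H, (inner ℂ (T i u) (T j v) : ℂ) = 0)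
    (α : ℝ) (hα0 : 0 < α) (hα1 : α < 1/3)
    (W0 : Submodule ℂ H) (W : Fin l → Submodule ℂ H)
    (h : H) (hh : ‖h‖ = 1)
    (Tα : Fin l → (H →ₗ[ℂ] E))
    (hTα : ∀ j, Tα j = (Complex.ofReal (Real.sqrt (1 - α))) • emb.toLinearMap
        + (Complex.ofReal (Real.sqrt α)) • (T j).toLinearMap)
    (Wbig : Submodule ℂ E)
    (hWbig : Wbig = (⨆ j, (W j).map (Tα j)) ⊔ W0.map emb.toLinearMap)
    (ε0 : ℝ) (hε0 : ε0 = ‖(Submodule.orthogonalProjection W0 h : H)‖ ^ 2)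
    (ε : Fin l → ℝ) (hε : ∀ j, ε j = ‖(Submodule.orthogonalProjection (W j) h : H)‖ ^ 2)
    (εtot : ℝ) (hεtot : εtot = (1 - α) / α * ∑ j, ε j) :
    max ε0 ((1 - α) * ⨆ j, ε j)
        ≤ ‖(Submodule.orthogonalProjection Wbig (emb h) : E)‖ ^ 2 ∧
    ‖(Submodule.orthogonalProjection Wbig (emb h) : E)‖ ^ 2 ≤ 3 * l / α * (ε0 + εtot) := by
  have h1α : (0:ℝ) < 1 - α := by linarith
  have hl1 : (1:ℝ) ≤ (l:ℝ) := by exact_mod_cast hl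
  haveI : Nonempty (Fin l) := ⟨⟨0, hl⟩⟩
  set x : E := emb h with hx
  set P : E := (Submodule.orthogonalProjection Wbig x : E) with hP
  have hPmem : P ∈ Wbig := Submodule.coe_mem _
  have hinner_proj : ∀ v : E, v ∈ Wbig → (inner ℂ x v : ℂ) = inner ℂ P v := by
    intro v hv
    have h0 := orthogonalProjection_inner_eq_zero x v hv
    rw [inner_sub_left, sub_eq_zero] at h0
    exact h0
  have key_lb : ∀ v : E, v ∈ Wbig → ‖(inner ℂ x v : ℂ)‖^2 ≤ ‖P‖^2 * ‖v‖^2 := by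
    intro v hv
    rw [hinner_proj v hv]
    have h1 := norm_inner_le_norm (𝕜 := ℂ) P v
    have h2 : (0:ℝ) ≤ ‖(inner ℂ P v : ℂ)‖ := norm_nonneg _
    nlinarith [norm_nonneg P, norm_nonneg v]
  have hTα_inner : ∀ j (u v : H),
      (inner ℂ (emb u) (Tα j v) : ℂ) = (Complex.ofReal (Real.sqrt (1-α))) * inner ℂ u v := by
    intro j u v
    rw [hTα j]
    simp only [LinearMap.add_apply, LinearMap.smul_apply, LinearIsometry.coe_toLinearMap,
      inner_add_right, inner_smul_right, LinearIsometry.inner_map_map, horth1, mul_zero, add_zero]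
  have hTα_norm : ∀ j (v : H), ‖Tα j v‖ = ‖v‖ := by
    intro j v
    have hcross : (inner ℂ ((Complex.ofReal (Real.sqrt (1-α))) • emb v)
        ((Complex.ofReal (Real.sqrt α)) • (T j) v) : ℂ) = 0 := by
      rw [inner_smul_left, inner_smul_right, horth1]
      ring
    have hsq : ‖Tα j v‖^2 = ‖v‖^2 := by
      rw [hTα j]
      simp only [LinearMap.add_apply, LinearMap.smul_apply, LinearIsometry.coe_toLinearMap]
      rw [norm_add_sq (𝕜 := ℂ), hcross]
      simp only [map_zero, mul_zero, add_zero, norm_smul, Complex.norm_real,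
        Real.norm_eq_abs, LinearIsometry.norm_map, mul_pow, sq_abs]
      rw [Real.sq_sqrt (le_of_lt h1α), Real.sq_sqrt (le_of_lt hα0)]
      ring
    calc ‖Tα j v‖ = Real.sqrt (‖Tα j v‖^2) := (Real.sqrt_sq (norm_nonneg _)).symm
      _ = Real.sqrt (‖v‖^2) := by rw [hsq]
      _ = ‖v‖ := Real.sqrt_sq (norm_nonneg _)
  have hε0nn : 0 ≤ ε0 := hε0 ▸ sq_nonneg _
  have hεnn : ∀ j, 0 ≤ ε j := fun j => (hε j) ▸ sq_nonneg _
  have lb0 : ε0 ≤ ‖P‖^2 := by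
    have hq0inner : (inner ℂ h ((Submodule.orthogonalProjection W0 h : H)) : ℂ) = (ε0 : ℂ) := by
      have h0 := orthogonalProjection_inner_eq_zero h
        ((Submodule.orthogonalProjection W0 h : H)) (Submodule.coe_mem _)
      rw [inner_sub_left, sub_eq_zero] at h0
      rw [h0, inner_self_eq_norm_sq_to_K, hε0]
      norm_cast
    have hmem : emb ((Submodule.orthogonalProjection W0 h : H)) ∈ Wbig := by
      rw [hWbig]
      exact Submodule.mem_sup_right ⟨_, Submodule.coe_mem _, rfl⟩
    have hk := key_lb _ hmem
    have hi : (inner ℂ x (emb ((Submodule.orthogonalProjection W0 h : H))) : ℂ) = (ε0:ℂ) := by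
      rw [hx, LinearIsometry.inner_map_map, hq0inner]
    rw [hi] at hk
    have hnv : ‖emb ((Submodule.orthogonalProjection W0 h : H))‖^2 = ε0 := by
      rw [LinearIsometry.norm_map, hε0]
    rw [hnv, Complex.norm_real, Real.norm_eq_abs, abs_of_nonneg hε0nn] at hk
    rcases hε0nn.eq_or_lt with h' | h'
    · rw [← h']; positivity
    · nlinarith
  have lbj : ∀ j, (1-α) * ε j ≤ ‖P‖^2 := by
    intro j
    set p := ((Submodule.orthogonalProjection (W j) h : H)) with hp
    have hmem : Tα j p ∈ Wbig := by
      rw [hWbig]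
      exact Submodule.mem_sup_left
        (Submodule.mem_iSup_of_mem j ⟨p, Submodule.coe_mem _, rfl⟩)
    have hk := key_lb _ hmem
    have hpinner : (inner ℂ h p : ℂ) = ((ε j : ℝ) : ℂ) := by
      have h0 := orthogonalProjection_inner_eq_zero h p (Submodule.coe_mem _)
      rw [inner_sub_left, sub_eq_zero] at h0
      rw [h0, inner_self_eq_norm_sq_to_K, hε j]
      norm_cast
    have hi : (inner ℂ x (Tα j p) : ℂ)
        = (Complex.ofReal (Real.sqrt (1-α))) * ((ε j : ℝ) : ℂ) := by
      rw [hx, hTα_inner, hpinner]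
    rw [hi] at hk
    have hnv : ‖Tα j p‖^2 = ε j := by rw [hTα_norm, hp, hε j]
    rw [hnv] at hk
    have hnm : ‖(Complex.ofReal (Real.sqrt (1-α))) * ((ε j : ℝ) : ℂ)‖
        = Real.sqrt (1-α) * ε j := by
      rw [norm_mul, Complex.norm_real, Complex.norm_real, Real.norm_eq_abs, Real.norm_eq_abs,
        abs_of_nonneg (Real.sqrt_nonneg _), abs_of_nonneg (hεnn j)]
    rw [hnm] at hk
    have hsq : (Real.sqrt (1-α))^2 = 1 - α := Real.sq_sqrt (le_of_lt h1α)
    rcases (hεnn j).eq_or_lt with h' | h'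
    · rw [← h', mul_zero]; positivity
    · rw [mul_pow, hsq] at hk
      rw [← mul_le_mul_iff_left₀ h']
      nlinarith [hk]
  have lbsup : (1-α) * ⨆ j, ε j ≤ ‖P‖^2 := by
    have hs : ⨆ j, ε j ≤ ‖P‖^2 / (1-α) := by
      apply ciSup_le
      intro j
      rw [le_div_iff₀ h1α]
      calc ε j * (1-α) = (1-α) * ε j := mul_comm _ _
        _ ≤ ‖P‖^2 := lbj j
    calc (1-α) * ⨆ j, ε j ≤ (1-α) * (‖P‖^2 / (1-α)) :=
          mul_le_mul_of_nonneg_left hs (le_of_lt h1α)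
      _ = ‖P‖^2 := by field_simp
  refine ⟨max_le lb0 lbsup, ?_⟩
  have hεtotnn : 0 ≤ εtot := by
    rw [hεtot]
    apply mul_nonneg (by positivity)
    exact Finset.sum_nonneg fun j _ => hεnn j
  have hCnn : 0 ≤ 3 * (l:ℝ) / α * (ε0 + εtot) := by positivity
  have hq0 : Real.sqrt ε0 = ‖(Submodule.orthogonalProjection W0 h : H)‖ := by
    rw [hε0, Real.sqrt_sq (norm_nonneg _)]
  have hqj : ∀ j, Real.sqrt (ε j) = ‖(Submodule.orthogonalProjection (W j) h : H)‖ := fun j => by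
    rw [hε j, Real.sqrt_sq (norm_nonneg _)]
  have key_ub : ∀ w : E, w ∈ Wbig →
      ‖(inner ℂ x w : ℂ)‖^2 ≤ (3 * l / α * (ε0 + εtot)) * ‖w‖^2 := by
    intro w hw
    rw [hWbig] at hw
    rcases Submodule.mem_sup.mp hw with ⟨a, ha, b, hb, rfl⟩
    obtain ⟨w0, hw0, rfl⟩ := Submodule.mem_map.mp hb
    rw [Submodule.mem_iSup_iff_exists_finsupp] at ha
    obtain ⟨f, hf1, hf2⟩ := ha
    choose g hg1 hg2 using fun j => Submodule.mem_map.mp (hf1 j)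
    have hfs : a = ∑ j, (Tα j) (g j) := by
      rw [← hf2, Finsupp.sum_fintype _ _ (fun _ => rfl)]
      exact Finset.sum_congr rfl fun j _ => (hg2 j).symm
    subst hfs
    set wE : E := (∑ j, (Tα j) (g j)) + emb.toLinearMap w0 with hwE
    set S : H := ∑ j, g j with hS
    set u : H := (Complex.ofReal (Real.sqrt (1-α))) • S + w0 with hu
    have hdecomp : wE
        = emb u + (Complex.ofReal (Real.sqrt α)) • ∑ j, (T j) (g j) := by
      rw [hwE]
      simp only [hTα, LinearMap.add_apply, LinearMap.smul_apply, LinearIsometry.coe_toLinearMap,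
        Finset.sum_add_distrib, hu, hS, map_add, map_smul, map_sum, Finset.smul_sum]
      abel
    have hfam : OrthogonalFamily ℂ (fun _ : Fin l => H) T := fun i j hij u v => horth2 i j hij u v
    have hTsum : ‖∑ j, (T j) (g j)‖^2 = ∑ j, ‖g j‖^2 := hfam.norm_sum g Finset.univ
    have hcross : (inner ℂ (emb u) ((Complex.ofReal (Real.sqrt α)) • ∑ j, (T j) (g j)) : ℂ) = 0 := by
      rw [inner_smul_right, inner_sum]
      simp [horth1]
    have hnormw : ‖wE‖^2 = ‖u‖^2 + α * ∑ j, ‖g j‖^2 := by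
      rw [hdecomp, norm_add_sq (𝕜 := ℂ), hcross]
      simp only [map_zero, mul_zero, add_zero, LinearIsometry.norm_map, norm_smul,
        Complex.norm_real, Real.norm_eq_abs, mul_pow, sq_abs, Real.sq_sqrt (le_of_lt hα0), hTsum]
    have hinnerw : (inner ℂ x wE : ℂ)
        = (Complex.ofReal (Real.sqrt (1-α))) * (∑ j, (inner ℂ h (g j) : ℂ)) + inner ℂ h w0 := by
      rw [hwE, inner_add_right, inner_sum]
      simp only [hx, hTα_inner, LinearIsometry.coe_toLinearMap, LinearIsometry.inner_map_map]
      rw [Finset.mul_sum]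
    have hgb : ∀ j, ‖(inner ℂ h (g j) : ℂ)‖ ≤ Real.sqrt (ε j) * ‖g j‖ := by
      intro j
      have h0 := orthogonalProjection_inner_eq_zero h (g j) (hg1 j)
      rw [inner_sub_left, sub_eq_zero] at h0
      rw [h0, hqj j]
      exact norm_inner_le_norm _ _
    have hw0b : ‖(inner ℂ h w0 : ℂ)‖ ≤ Real.sqrt ε0 * ‖w0‖ := by
      have h0 := orthogonalProjection_inner_eq_zero h w0 hw0
      rw [inner_sub_left, sub_eq_zero] at h0
      rw [h0, hq0]
      exact norm_inner_le_norm _ _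
    have hXb : ‖(inner ℂ x wE : ℂ)‖
        ≤ Real.sqrt (1-α) * (∑ j, Real.sqrt (ε j) * ‖g j‖) + Real.sqrt ε0 * ‖w0‖ := by
      rw [hinnerw]
      have h1 : ‖(Complex.ofReal (Real.sqrt (1-α))) * (∑ j, (inner ℂ h (g j) : ℂ))‖
          ≤ Real.sqrt (1-α) * ∑ j, Real.sqrt (ε j) * ‖g j‖ := by
        rw [norm_mul, Complex.norm_real, Real.norm_eq_abs, abs_of_nonneg (Real.sqrt_nonneg _)]
        exact mul_le_mul_of_nonneg_left
          ((norm_sum_le _ _).trans (Finset.sum_le_sum fun j _ => hgb j)) (Real.sqrt_nonneg _)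
      exact (norm_add_le _ _).trans (add_le_add h1 hw0b)
    -- real abbreviations
    set A : ℝ := ∑ j, Real.sqrt (ε j) * ‖g j‖ with hA
    set sa : ℝ := ∑ j, ε j with hsa
    set sb : ℝ := (1-α) * ∑ j, ‖g j‖^2 with hsb
    set sd : ℝ := ‖w0‖^2 with hsd
    set N2 : ℝ := ‖wE‖^2 with hN2'
    clear_value A sa sb sd N2
    have hsann : 0 ≤ sa := by
      rw [hsa]; exact Finset.sum_nonneg fun j _ => hεnn j
    have hsum2nn : 0 ≤ ∑ j, ‖g j‖^2 := Finset.sum_nonneg fun j _ => sq_nonneg _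
    have hsbnn : 0 ≤ sb := by rw [hsb]; exact mul_nonneg (le_of_lt h1α) hsum2nn
    have hAnn : 0 ≤ A := by
      rw [hA]
      exact Finset.sum_nonneg fun j _ => mul_nonneg (Real.sqrt_nonneg _) (norm_nonneg _)
    have hCS : A^2 ≤ sa * (∑ j, ‖g j‖^2) := by
      rw [hA, hsa]
      have h8 := Finset.sum_mul_sq_le_sq_mul_sq Finset.univ
        (fun j => Real.sqrt (ε j)) (fun j => ‖g j‖)
      calc (∑ j, Real.sqrt (ε j) * ‖g j‖)^2
          ≤ (∑ j, Real.sqrt (ε j)^2) * (∑ j, ‖g j‖^2) := h8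
        _ = (∑ j, ε j) * (∑ j, ‖g j‖^2) := by
            congr 1
            exact Finset.sum_congr rfl fun j _ => Real.sq_sqrt (hεnn j)
    have hstep1 : Real.sqrt (1-α) * A ≤ Real.sqrt sa * Real.sqrt sb := by
      rw [← Real.sqrt_mul hsann]
      rw [Real.le_sqrt (mul_nonneg (Real.sqrt_nonneg _) hAnn) (mul_nonneg hsann hsbnn)]
      rw [mul_pow, Real.sq_sqrt (le_of_lt h1α), hsb]
      nlinarith [mul_le_mul_of_nonneg_left hCS (le_of_lt h1α)]
    have hw0u : w0 = u - (Complex.ofReal (Real.sqrt (1-α))) • S := by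
      rw [hu]; abel
    have ht : ‖w0‖ ≤ ‖u‖ + Real.sqrt (1-α) * ∑ j, ‖g j‖ := by
      calc ‖w0‖ = ‖u - (Complex.ofReal (Real.sqrt (1-α))) • S‖ := by rw [← hw0u]
        _ ≤ ‖u‖ + ‖(Complex.ofReal (Real.sqrt (1-α))) • S‖ := norm_sub_le _ _
        _ ≤ ‖u‖ + Real.sqrt (1-α) * ∑ j, ‖g j‖ := by
            gcongr
            rw [norm_smul, Complex.norm_real, Real.norm_eq_abs,
              abs_of_nonneg (Real.sqrt_nonneg _)]
            exact mul_le_mul_of_nonneg_left (norm_sum_le _ _) (Real.sqrt_nonneg _)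
    have hsq_sum : (∑ j, ‖g j‖)^2 ≤ (l:ℝ) * ∑ j, ‖g j‖^2 := by
      have := sq_sum_le_card_mul_sum_sq (s := Finset.univ) (f := fun j => ‖g j‖)
      simpa using this
    have hun : ‖u‖^2 ≤ N2 := by
      rw [hnormw]
      nlinarith [hsum2nn, hα0]
    have hgsum : α * ∑ j, ‖g j‖^2 ≤ N2 := by
      rw [hnormw]
      nlinarith [sq_nonneg ‖u‖]
    have hd := aux_sd ‖w0‖ ‖u‖ (Real.sqrt (1-α)) (∑ j, ‖g j‖) (∑ j, ‖g j‖^2) N2 (l:ℝ)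
      ht (norm_nonneg _) (Real.sqrt_nonneg _)
      (Finset.sum_nonneg fun j _ => norm_nonneg _) hsq_sum hun
    rw [Real.sq_sqrt (le_of_lt h1α), hnormw] at hd
    have hbd : sb + sd ≤ 3 * (l:ℝ) / α * N2 := by
      have h9 := aux_bd α (l:ℝ) (∑ j, ‖g j‖^2) (‖u‖^2) sd hα0 hα1 hl1 hsum2nn (sq_nonneg _)
        (by rw [hsd]; exact hd)
      rw [← hnormw] at h9
      rw [hsb]
      exact h9
    have hsddnn : 0 ≤ sd := by rw [hsd]; exact sq_nonneg _
    have hac : sa + ε0 ≤ ε0 + εtot := by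
      have h1d : (1:ℝ) ≤ (1-α)/α := (one_le_div hα0).mpr (by linarith)
      have h2 : sa ≤ (1-α)/α * sa := le_mul_of_one_le_left hsann h1d
      rw [hεtot]
      linarith
    have hsdeq : Real.sqrt sd = ‖w0‖ := by rw [hsd, Real.sqrt_sq (norm_nonneg _)]
    have h6 : ‖(inner ℂ x wE : ℂ)‖
        ≤ Real.sqrt sa * Real.sqrt sb + Real.sqrt ε0 * Real.sqrt sd := by
      refine hXb.trans ?_
      rw [hsdeq]
      exact add_le_add hstep1 le_rfl
    have hfinal1 : ‖(inner ℂ x wE : ℂ)‖^2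
        ≤ (Real.sqrt sa * Real.sqrt sb + Real.sqrt ε0 * Real.sqrt sd)^2 :=
      pow_le_pow_left₀ (norm_nonneg _) h6 2
    have hfinal2 := sqrtCS sa sb ε0 sd hsann hsbnn hε0nn hsddnn
    calc ‖(inner ℂ x wE : ℂ)‖^2 ≤ (sa + ε0) * (sb + sd) := hfinal1.trans hfinal2
      _ ≤ (ε0 + εtot) * (3 * (l:ℝ) / α * N2) :=
          mul_le_mul hac hbd (by positivity) (by linarith [hε0nn, hεtotnn])
      _ = 3 * (l:ℝ) / α * (ε0 + εtot) * N2 := by ring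
  have hip : (inner ℂ x P : ℂ) = ((‖P‖^2 : ℝ) : ℂ) := by
    rw [hinner_proj P hPmem, inner_self_eq_norm_sq_to_K]
    norm_cast
  have hk := key_ub P hPmem
  rw [hip, Complex.norm_real, Real.norm_eq_abs, abs_of_nonneg (sq_nonneg _)] at hk
  rcases (sq_nonneg ‖P‖).eq_or_lt with h' | h'
  · calc ‖P‖^2 = 0 := h'.symm
      _ ≤ _ := hCnn
  · nlinarith [hk, h']
end

section
/- In the tilted-span setting with vectors in $\mathcal{H}\oplus\bigoplus_{j=1}^l\mathcal{H}_j$: for $0<\alpha<1$, any unit vector $|v\rangle\in\mathcal{H}$, and any unit vector $|w\rangle$ in the subspace $\sum_{j=1}^l \mathcal{T}_{j,\alpha}(\mathcal{H})$, the inner product satisfies $|\langle v|w\rangle| \le \sqrt{l(1-\alpha)}/\sqrt{l(1-\alpha)+\alpha} \le 1 - \alpha/(3l)$, with the maximum attained by $|w\rangle = \frac{1}{\sqrt{l^2(1-\alpha)+l\alpha}}\big(l\sqrt{1-\alpha}|v\rangle + \sqrt{\alpha}\sum_{j=1}^l \mathcal{T}_j(|v\rangle)\big)$. -/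
/-!
Write `w = ∑ⱼ T_{j,α}(uⱼ)` and `U = ∑ⱼ uⱼ`. Since the copies `Hⱼ` are orthogonal to `H` and to
each other, `⟨v|w⟩ = √(1-α) ⟨v|U⟩` while `1 = ‖w‖² = (1-α)‖U‖² + α ∑ⱼ ‖uⱼ‖²`. Cauchy–Schwarz
gives `‖U‖² ≤ l ∑ⱼ ‖uⱼ‖²`, hence `‖U‖² ≤ l / (l(1-α)+α)` and the bound; all inequalities are
equalities when every `uⱼ` is the same multiple of `v`, which is `w₀`. Finally
`√(1-x) ≤ 1 - x/2` with `x = α/(l(1-α)+α) ≥ α/l` gives `1 - α/(3l)`.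
-/

open scoped InnerProductSpace

theorem Real.sqrt_one_sub_le_one_sub_half {x : ℝ} (hx : x ≤ 2) : √(1 - x) ≤ 1 - x / 2 :=
  Real.sqrt_le_iff.mpr ⟨by linarith, by nlinarith [sq_nonneg x]⟩

theorem sqrt_div_sqrt_le_one_sub {L α : ℝ} (hL : 1 ≤ L) (hα0 : 0 < α) (hα1 : α ≤ 1) :
    √(L * (1 - α)) / √(L * (1 - α) + α) ≤ 1 - α / (3 * L) := by
  set t := L * (1 - α) + α
  have ht : α ≤ t := by nlinarith
  have htL : t ≤ L := by nlinarith
  have ht0 : 0 < t := hα0.trans_le ht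
  calc √(L * (1 - α)) / √t = √(1 - α / t) := by
        rw [← Real.sqrt_div' _ ht0.le]; congr 1; field_simp; ring
    _ ≤ 1 - α / t / 2 :=
        Real.sqrt_one_sub_le_one_sub_half (by rw [div_le_iff₀ ht0]; linarith)
    _ ≤ 1 - α / (3 * L) := by
        rw [div_div]
        have := div_le_div_of_nonneg_left hα0.le (by positivity) (by linarith : t * 2 ≤ 3 * L)
        linarith

theorem sqrt_one_sub_mul_le {L α x s : ℝ} (hL : 0 ≤ L) (hα0 : 0 < α) (hα1 : α ≤ 1)
    (hx : x ^ 2 ≤ L * s) (h : (1 - α) * x ^ 2 + α * s = 1) :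
    √(1 - α) * x ≤ √(L * (1 - α)) / √(L * (1 - α) + α) := by
  have ht : 0 < L * (1 - α) + α := by nlinarith
  rw [← Real.sqrt_div' _ ht.le]
  refine Real.le_sqrt_of_sq_le ?_
  rw [mul_pow, Real.sq_sqrt (by linarith), le_div_iff₀ ht]
  nlinarith [mul_le_mul_of_nonneg_left hx (by nlinarith : 0 ≤ α * (1 - α))]

theorem mul_sqrt_div_sqrt_eq {L x y : ℝ} (hL : 0 < L) :
    L * √x / √(L ^ 2 * x + L * y) = √(L * x) / √(L * x + y) := by
  rw [show L ^ 2 * x + L * y = L * (L * x + y) by ring, Real.sqrt_mul hL.le, Real.sqrt_mul hL.le]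
  calc L * √x / (√L * √(L * x + y)) = √L * √x / √(L * x + y) * (L / (√L * √L)) := by
        field_simp
    _ = √L * √x / √(L * x + y) := by rw [Real.mul_self_sqrt hL.le, div_self hL.ne', mul_one]

theorem Submodule.mem_iSup_map_top_iff {R M N ι : Type*} [Semiring R] [AddCommMonoid M]
    [AddCommMonoid N] [Module R M] [Module R N] [Fintype ι] (f : ι → M →ₗ[R] N) {w : N} :
    w ∈ ⨆ j, (⊤ : Submodule R M).map (f j) ↔ ∃ u : ι → M, ∑ j, f j (u j) = w := by
  constructor
  · rw [Submodule.mem_iSup_iff_exists_finsupp]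
    rintro ⟨g, hg, rfl⟩
    choose u _ hu using hg
    exact ⟨u, by rw [Finsupp.sum_fintype _ _ fun _ => rfl]; simp [hu]⟩
  · rintro ⟨u, rfl⟩
    exact Submodule.sum_mem_iSup fun j => ⟨u j, trivial, rfl⟩

theorem norm_sum_sq_le_card_mul {E ι : Type*} [SeminormedAddCommGroup E] [Fintype ι]
    (u : ι → E) : ‖∑ j, u j‖ ^ 2 ≤ Fintype.card ι * ∑ j, ‖u j‖ ^ 2 := by
  calc ‖∑ j, u j‖ ^ 2 ≤ (∑ j, ‖u j‖) ^ 2 := by gcongr; exact norm_sum_le _ _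
    _ ≤ _ := by simpa using sq_sum_le_card_mul_sum_sq (s := Finset.univ) (f := fun j => ‖u j‖)

theorem norm_ofReal_sqrt_smul_sq {𝕜 E : Type*} [RCLike 𝕜] [NormedAddCommGroup E]
    [NormedSpace 𝕜 E] {a : ℝ} (ha : 0 ≤ a) (x : E) :
    ‖((√a : ℝ) : 𝕜) • x‖ ^ 2 = a * ‖x‖ ^ 2 := by
  rw [norm_smul, RCLike.norm_ofReal, abs_of_nonneg (Real.sqrt_nonneg a), mul_pow,
    Real.sq_sqrt ha]

section

variable {𝕜 H E ι : Type*} [RCLike 𝕜]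
  [NormedAddCommGroup H] [InnerProductSpace 𝕜 H] [NormedAddCommGroup E] [InnerProductSpace 𝕜 E]

/-- `tilt emb (T j) α` is the paper's `T_{j,α}`, with `emb` the inclusion `ι`. -/
noncomputable def tilt (emb T : H →ₗᵢ[𝕜] E) (α : ℝ) : H →ₗ[𝕜] E :=
  ((√(1 - α) : ℝ) : 𝕜) • emb.toLinearMap + ((√α : ℝ) : 𝕜) • T.toLinearMap

namespace tilt

variable [Fintype ι] {emb : H →ₗᵢ[𝕜] E} {T : ι → H →ₗᵢ[𝕜] E} {α : ℝ}

variable (emb T α) in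
theorem sum_apply (u : ι → H) :
    ∑ j, tilt emb (T j) α (u j)
      = ((√(1 - α) : ℝ) : 𝕜) • emb (∑ j, u j) + ((√α : ℝ) : 𝕜) • ∑ j, T j (u j) := by
  simp [tilt, Finset.sum_add_distrib, Finset.smul_sum]

theorem inner_emb_sum (horth : ∀ j u v, ⟪emb u, T j v⟫_𝕜 = 0) (v : H) (u : ι → H) :
    ⟪emb v, ∑ j, tilt emb (T j) α (u j)⟫_𝕜 = ((√(1 - α) : ℝ) : 𝕜) * ⟪v, ∑ j, u j⟫_𝕜 := by
  simp [sum_apply, inner_add_right, inner_smul_right, inner_sum, horth]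

theorem norm_sum_sq (horth : ∀ j u v, ⟪emb u, T j v⟫_𝕜 = 0)
    (hT : OrthogonalFamily 𝕜 (fun _ => H) T) (hα0 : 0 ≤ α) (hα1 : α ≤ 1) (u : ι → H) :
    ‖∑ j, tilt emb (T j) α (u j)‖ ^ 2 = (1 - α) * ‖∑ j, u j‖ ^ 2 + α * ∑ j, ‖u j‖ ^ 2 := by
  have hperp :
      ⟪((√(1 - α) : ℝ) : 𝕜) • emb (∑ j, u j), ((√α : ℝ) : 𝕜) • ∑ j, T j (u j)⟫_𝕜 = 0 := by
    simp only [inner_smul_left, inner_smul_right, inner_sum, horth, Finset.sum_const_zero,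
      mul_zero]
  rw [sum_apply, @norm_add_sq 𝕜, hperp, map_zero, mul_zero, add_zero,
    norm_ofReal_sqrt_smul_sq (by linarith), norm_ofReal_sqrt_smul_sq hα0, emb.norm_map,
    hT.norm_sum u]

theorem norm_inner_emb_le_of_mem_iSup (horth : ∀ j u v, ⟪emb u, T j v⟫_𝕜 = 0)
    (hT : OrthogonalFamily 𝕜 (fun _ => H) T) (hα0 : 0 < α) (hα1 : α ≤ 1) {v : H}
    (hv : ‖v‖ = 1) {w : E} (hw : w ∈ ⨆ j, (⊤ : Submodule 𝕜 H).map (tilt emb (T j) α))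
    (hw1 : ‖w‖ = 1) :
    ‖⟪emb v, w⟫_𝕜‖
      ≤ √(Fintype.card ι * (1 - α)) / √(Fintype.card ι * (1 - α) + α) := by
  obtain ⟨u, rfl⟩ := (Submodule.mem_iSup_map_top_iff _).mp hw
  have hunit : (1 - α) * ‖∑ j, u j‖ ^ 2 + α * ∑ j, ‖u j‖ ^ 2 = 1 := by
    rw [← norm_sum_sq horth hT hα0.le hα1, hw1, one_pow]
  rw [inner_emb_sum horth, norm_mul, RCLike.norm_ofReal, abs_of_nonneg (Real.sqrt_nonneg _)]
  calc √(1 - α) * ‖⟪v, ∑ j, u j⟫_𝕜‖ ≤ √(1 - α) * ‖∑ j, u j‖ := by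
        gcongr; simpa [hv] using norm_inner_le_norm (𝕜 := 𝕜) v (∑ j, u j)
    _ ≤ _ := sqrt_one_sub_mul_le (Nat.cast_nonneg _) hα0 hα1 (norm_sum_sq_le_card_mul u) hunit

theorem norm_inner_emb_sum_smul (horth : ∀ j u v, ⟪emb u, T j v⟫_𝕜 = 0) {v : H}
    (hv : ‖v‖ = 1) (c : 𝕜) :
    ‖⟪emb v, ∑ j, tilt emb (T j) α (c • v)⟫_𝕜‖ = Fintype.card ι * √(1 - α) * ‖c‖ := by
  rw [inner_emb_sum horth, Finset.sum_const, Finset.card_univ, ← Nat.cast_smul_eq_nsmul 𝕜,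
    inner_smul_right, inner_smul_right, inner_self_eq_norm_sq_to_K, hv]
  simp [abs_of_nonneg (Real.sqrt_nonneg (1 - α))]
  ring

end tilt

end

theorem stmt4_general {H E : Type*}
    [NormedAddCommGroup H] [InnerProductSpace ℂ H]
    [NormedAddCommGroup E] [InnerProductSpace ℂ E]
    {l : ℕ} (hl : 0 < l)
    (emb : H →ₗᵢ[ℂ] E) (T : Fin l → (H →ₗᵢ[ℂ] E))
    (horth1 : ∀ j, ∀ u v : H, (inner ℂ (emb u) (T j v) : ℂ) = 0)
    (horth2 : ∀ i j, i ≠ j → ∀ u v : H, (inner ℂ (T i u) (T j v) : ℂ) = 0)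
    (α : ℝ) (hα0 : 0 < α) (hα1 : α < 1)
    (v : H) (hv : ‖v‖ = 1)
    (Tα : Fin l → (H →ₗ[ℂ] E))
    (hTα : ∀ j, Tα j = (Complex.ofReal (Real.sqrt (1 - α))) • emb.toLinearMap
        + (Complex.ofReal (Real.sqrt α)) • (T j).toLinearMap)
    (Wspan : Submodule ℂ E) (hWspan : Wspan = ⨆ j, Submodule.map (Tα j) ⊤)
    (w₀ : E)
    (hw₀ : w₀ = (Complex.ofReal ((Real.sqrt ((l : ℝ)^2 * (1 - α) + l * α))⁻¹)) •
        ((Complex.ofReal ((l : ℝ) * Real.sqrt (1 - α))) • emb v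
          + (Complex.ofReal (Real.sqrt α)) • ∑ j, T j v)) :
    (∀ w ∈ Wspan, ‖w‖ = 1 →
        ‖(inner ℂ (emb v) w : ℂ)‖
          ≤ Real.sqrt ((l : ℝ) * (1 - α)) / Real.sqrt ((l : ℝ) * (1 - α) + α)) ∧
    Real.sqrt ((l : ℝ) * (1 - α)) / Real.sqrt ((l : ℝ) * (1 - α) + α)
        ≤ 1 - α / (3 * l) ∧
    w₀ ∈ Wspan ∧
    ‖(inner ℂ (emb v) w₀ : ℂ)‖
        = Real.sqrt ((l : ℝ) * (1 - α)) / Real.sqrt ((l : ℝ) * (1 - α) + α) := by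
  have hT : OrthogonalFamily ℂ (fun _ => H) T := fun i j hij => horth2 i j hij
  obtain rfl : Tα = fun j => tilt emb (T j) α := funext hTα
  set c := (√((l : ℝ) ^ 2 * (1 - α) + l * α))⁻¹
  have hw₀_sum : w₀ = ∑ j, tilt emb (T j) α ((c : ℂ) • v) := by
    simp only [map_smul, ← Finset.smul_sum, tilt.sum_apply, hw₀, Finset.sum_const,
      Finset.card_univ, Fintype.card_fin, map_nsmul, RCLike.ofReal_eq_complex_ofReal]
    push_cast
    module
  subst hWspan
  refine ⟨fun w hw hw1 => ?_, sqrt_div_sqrt_le_one_sub (Nat.one_le_cast.mpr hl) hα0 hα1.le,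
    ?_, ?_⟩
  · simpa using tilt.norm_inner_emb_le_of_mem_iSup horth1 hT hα0 hα1.le hv hw hw1
  · rw [hw₀_sum, Submodule.mem_iSup_map_top_iff]
    exact ⟨_, rfl⟩
  · rw [hw₀_sum, tilt.norm_inner_emb_sum_smul horth1 hv, Fintype.card_fin, Complex.norm_real,
      Real.norm_of_nonneg (by positivity), ← div_eq_mul_inv, mul_sqrt_div_sqrt_eq (by positivity)]

/-- The largest overlap of a unit vector `v ∈ H` with the tilted span
`∑ⱼ T_{j,α}(H)`: the maximal inner product is `√(l(1-α))/√(l(1-α)+α) ≤ 1-α/(3l)`,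
attained at the explicit vector `w₀`. -/
theorem stmt4 {H E : Type*}
    [NormedAddCommGroup H] [InnerProductSpace ℂ H] [FiniteDimensional ℂ H]
    [NormedAddCommGroup E] [InnerProductSpace ℂ E] [FiniteDimensional ℂ E]
    {l : ℕ} (hl : 0 < l)
    (emb : H →ₗᵢ[ℂ] E) (T : Fin l → (H →ₗᵢ[ℂ] E))
    (horth1 : ∀ j, ∀ u v : H, (inner ℂ (emb u) (T j v) : ℂ) = 0)
    (horth2 : ∀ i j, i ≠ j → ∀ u v : H, (inner ℂ (T i u) (T j v) : ℂ) = 0)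
    (α : ℝ) (hα0 : 0 < α) (hα1 : α < 1)
    (v : H) (hv : ‖v‖ = 1)
    (Tα : Fin l → (H →ₗ[ℂ] E))
    (hTα : ∀ j, Tα j = (Complex.ofReal (Real.sqrt (1 - α))) • emb.toLinearMap
        + (Complex.ofReal (Real.sqrt α)) • (T j).toLinearMap)
    (Wspan : Submodule ℂ E) (hWspan : Wspan = ⨆ j, Submodule.map (Tα j) ⊤)
    (w₀ : E)
    (hw₀ : w₀ = (Complex.ofReal ((Real.sqrt ((l : ℝ)^2 * (1 - α) + l * α))⁻¹)) •
        ((Complex.ofReal ((l : ℝ) * Real.sqrt (1 - α))) • emb v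
          + (Complex.ofReal (Real.sqrt α)) • ∑ j, T j v)) :
    (∀ w ∈ Wspan, ‖w‖ = 1 →
        ‖(inner ℂ (emb v) w : ℂ)‖
          ≤ Real.sqrt ((l : ℝ) * (1 - α)) / Real.sqrt ((l : ℝ) * (1 - α) + α)) ∧
    Real.sqrt ((l : ℝ) * (1 - α)) / Real.sqrt ((l : ℝ) * (1 - α) + α)
        ≤ 1 - α / (3 * l) ∧
    w₀ ∈ Wspan ∧
    ‖(inner ℂ (emb v) w₀ : ℂ)‖
        = Real.sqrt ((l : ℝ) * (1 - α)) / Real.sqrt ((l : ℝ) * (1 - α) + α) :=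
  stmt4_general hl emb T horth1 horth2 α hα0 hα1 v hv Tα hTα Wspan hWspan w₀ hw₀
end

section
/- Let $\rho^{ABC} = |\rho\rangle\langle\rho|$ be a pure tripartite state with Schmidt decomposition $|\rho\rangle = \sum_{a=1}^{|A|}\sqrt{p_a}|x_a\rangle^A\otimes|y_a\rangle^{BC}$ across the cut $(A,BC)$. Let $0\le\epsilon<1$, let $\Pi^{AB}$ be a POVM element on $AB$ with $\mathrm{Tr}[(\Pi^{AB}\otimes\mathbb{1}^C)\rho^{ABC}]\ge 1-\epsilon$, and set $\Pi^{ABC}:=\Pi^{AB}\otimes\mathbb{1}^C$. Then $\mathrm{Tr}[\Pi^{ABC}(\rho^A\otimes\rho^{BC})] \ge \frac{2^4(1-\epsilon)^3}{3^6|A|^2}$. -/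
open Matrix Finset
open scoped ComplexOrder

/-- Rank-one (outer product) operator `|u⟩⟨v|`. -/
noncomputable def outer {ι : Type*} (u v : ι → ℂ) : Matrix ι ι ℂ :=
  fun p q => u p * star (v q)

lemma trace_mul_outer {ι : Type*} [Fintype ι] (M : Matrix ι ι ℂ) (u : ι → ℂ) :
    Matrix.trace (M * outer u u) = star u ⬝ᵥ (M *ᵥ u) := by
  simp only [Matrix.trace, Matrix.diag, Matrix.mul_apply, outer, dotProduct,
    Matrix.mulVec, Pi.star_apply, Finset.mul_sum]
  refine Finset.sum_congr rfl fun q _ => Finset.sum_congr rfl fun r _ => by ring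

lemma sum_dotProduct' {ι κ : Type*} [Fintype κ] (s : Finset ι) (f : ι → κ → ℂ) (v : κ → ℂ) :
    (∑ i ∈ s, f i) ⬝ᵥ v = ∑ i ∈ s, f i ⬝ᵥ v := by
  simp only [dotProduct, Finset.sum_apply, Finset.sum_mul]
  exact Finset.sum_comm

lemma dotProduct_sum' {ι κ : Type*} [Fintype κ] (s : Finset ι) (v : κ → ℂ) (f : ι → κ → ℂ) :
    v ⬝ᵥ (∑ i ∈ s, f i) = ∑ i ∈ s, v ⬝ᵥ f i := by
  simp only [dotProduct, Finset.sum_apply, Finset.mul_sum]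
  exact Finset.sum_comm


lemma dot_sum_ortho {ι κ : Type*} [Fintype κ] [DecidableEq ι] (T : Finset ι)
    (e : ι → κ → ℂ) (hon : ∀ i j, star (e i) ⬝ᵥ e j = if i = j then 1 else 0)
    (r : ι → ℝ) :
    star (∑ i ∈ T, ((r i : ℝ) : ℂ) • e i) ⬝ᵥ (∑ i ∈ T, ((r i : ℝ) : ℂ) • e i)
      = ((∑ i ∈ T, (r i) ^ 2 : ℝ) : ℂ) := by
  rw [star_sum, sum_dotProduct']
  rw [Finset.sum_congr rfl fun i (_ : i ∈ T) => dotProduct_sum' T _ _]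
  simp only [star_smul, smul_dotProduct, dotProduct_smul, hon, smul_eq_mul,
    mul_ite, mul_one, mul_zero, RCLike.star_def, Complex.conj_ofReal]
  push_cast
  refine Finset.sum_congr rfl fun i hi => ?_
  rw [Finset.sum_ite_eq, if_pos hi]
  ring

lemma kron_psd {a b c : ℕ} (P : Matrix (Fin a × Fin b) (Fin a × Fin b) ℂ) (hP : P.PosSemidef)
    (M : Matrix (Fin a × Fin b × Fin c) (Fin a × Fin b × Fin c) ℂ)
    (hM : ∀ q r, M q r = P (q.1, q.2.1) (r.1, r.2.1) * (if q.2.2 = r.2.2 then 1 else 0)) :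
    M.PosSemidef := by
  refine Matrix.PosSemidef.of_dotProduct_mulVec_nonneg ?_ ?_
  · rw [Matrix.IsHermitian]
    ext q r
    rw [Matrix.conjTranspose_apply, hM, hM, star_mul', hP.1.apply]
    congr 1
    split_ifs with h1 h2 h2 <;> simp_all [eq_comm]
  · intro v
    have inner : ∀ q : Fin a × Fin b × Fin c,
        (M *ᵥ v) q = ∑ ij : Fin a × Fin b, P (q.1, q.2.1) ij * v (ij.1, ij.2, q.2.2) := by
      intro q
      simp only [Matrix.mulVec, dotProduct, hM, Fintype.sum_prod_type, mul_ite, mul_one,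
        mul_zero, ite_mul, zero_mul]
      simp [Finset.sum_ite_eq]
    let F : Fin c × Fin a × Fin b → ℂ := fun w =>
      star (v (w.2.1, w.2.2, w.1)) *
        ∑ ij : Fin a × Fin b, P (w.2.1, w.2.2) ij * v (ij.1, ij.2, w.1)
    let e : (Fin a × Fin b × Fin c) ≃ (Fin c × Fin a × Fin b) :=
      ⟨fun q => (q.2.2, q.1, q.2.1), fun w => (w.2.1, w.2.2, w.1), fun q => rfl, fun w => rfl⟩
    have h1 : star v ⬝ᵥ M *ᵥ v = ∑ q : Fin a × Fin b × Fin c, F (e q) := by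
      refine Finset.sum_congr rfl fun q _ => ?_
      rw [inner q]
      simp only [F, e, Equiv.coe_fn_mk, Pi.star_apply]
    have h2 : ∑ q : Fin a × Fin b × Fin c, F (e q) = ∑ w : Fin c × Fin a × Fin b, F w :=
      Fintype.sum_equiv e _ _ (fun q => rfl)
    have h3 : ∑ w : Fin c × Fin a × Fin b, F w = ∑ k : Fin c,
        star (fun ij : Fin a × Fin b => v (ij.1, ij.2, k)) ⬝ᵥ
          (P *ᵥ fun ij : Fin a × Fin b => v (ij.1, ij.2, k)) := by
      rw [Fintype.sum_prod_type]
      rfl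
    rw [h1, h2, h3]
    exact Finset.sum_nonneg fun k _ => hP.dotProduct_mulVec_nonneg _

set_option maxHeartbeats 1000000 in
/-- Key estimate behind the dimension bound on hypothesis testing mutual
information: for a pure tripartite state with Schmidt decomposition across
`(A, BC)` and a POVM element `Π^{AB} ⊗ 1^C` accepting the state with
probability `≥ 1-ε`, the acceptance probability of `ρ^A ⊗ ρ^{BC}` is at least
`2⁴(1-ε)³/(3⁶|A|²)`. -/
theorem stmt8 {a b c : ℕ} (ε : ℝ) (hε0 : 0 ≤ ε) (hε1 : ε < 1)
    (p : Fin a → ℝ) (hp0 : ∀ i, 0 ≤ p i) (hp1 : ∑ i, p i = 1)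
    (x : Fin a → Fin a → ℂ)
    (hx : ∀ i i', ∑ s, star (x i s) * x i' s = if i = i' then 1 else 0)
    (y : Fin a → (Fin b × Fin c) → ℂ)
    (hy : ∀ i i', ∑ s, star (y i s) * y i' s = if i = i' then 1 else 0)
    (ρvec : (Fin a × Fin b × Fin c) → ℂ)
    (hρvec : ∀ q, ρvec q = ∑ i, (Real.sqrt (p i) : ℂ) * x i q.1 * y i q.2)
    (P : Matrix (Fin a × Fin b) (Fin a × Fin b) ℂ)
    (hP : P.PosSemidef) (hP1 : (1 - P).PosSemidef)
    (PABC : Matrix (Fin a × Fin b × Fin c) (Fin a × Fin b × Fin c) ℂ)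
    (hPABC : ∀ q r, PABC q r =
        P (q.1, q.2.1) (r.1, r.2.1) * (if q.2.2 = r.2.2 then 1 else 0))
    (hacc : 1 - ε ≤ (Matrix.trace (PABC * outer ρvec ρvec)).re)
    (ρA : Matrix (Fin a) (Fin a) ℂ)
    (hρA : ∀ i i', ρA i i' = ∑ s, (p s : ℂ) * x s i * star (x s i'))
    (ρBC : Matrix (Fin b × Fin c) (Fin b × Fin c) ℂ)
    (hρBC : ∀ j j', ρBC j j' = ∑ s, (p s : ℂ) * y s j * star (y s j'))
    (τ : Matrix (Fin a × Fin b × Fin c) (Fin a × Fin b × Fin c) ℂ)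
    (hτ : ∀ q r, τ q r = ρA q.1 r.1 * ρBC q.2 r.2) :
    2 ^ 4 * (1 - ε) ^ 3 / (3 ^ 6 * (a : ℝ) ^ 2) ≤ (Matrix.trace (PABC * τ)).re := by
  classical
  have haK : (0:ℝ) < 1 - ε := by linarith
  have ha : 0 < a := by
    rcases Nat.eq_zero_or_pos a with h | h
    · subst h; simp at hp1
    · exact h
  have haR : (0:ℝ) < (a:ℝ) := by exact_mod_cast ha
  -- positive semidefiniteness
  have hPi : PABC.PosSemidef := kron_psd P hP PABC hPABC
  have h1M : ∀ q r, (1 - PABC) q r =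
      (1 - P) (q.1, q.2.1) (r.1, r.2.1) * (if q.2.2 = r.2.2 then 1 else 0) := by
    intro q r
    simp only [Matrix.sub_apply, Matrix.one_apply, hPABC, Prod.ext_iff]
    by_cases h1 : q.1 = r.1 <;> by_cases h2 : q.2.1 = r.2.1 <;>
      by_cases h3 : q.2.2 = r.2.2 <;> simp [h1, h2, h3] <;> ring
  have hPi1 : (1 - PABC).PosSemidef := kron_psd (1 - P) hP1 _ h1M
  -- square root and associated "half-POVM" linear map
  obtain ⟨g0, hg0sa, -, hg0⟩ := open MatrixOrder in
    CFC.exists_sqrt_of_isSelfAdjoint_of_quasispectrumRestricts (A := Matrix _ _ ℂ)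
      hPi.isHermitian (QuasispectrumRestricts.nnreal_of_nonneg hPi.nonneg)
  have hgherm : g0.IsHermitian := hg0sa
  have hgg : g0 * g0 = PABC := hg0
  set g := g0 with hgdef
  let F : ((Fin a × Fin b × Fin c) → ℂ) →ₗ[ℂ] EuclideanSpace ℂ (Fin a × Fin b × Fin c) :=
    (WithLp.linearEquiv 2 ℂ _).symm.toLinearMap ∘ₗ g.mulVecLin
  have hFapply : ∀ u, F u = (WithLp.equiv 2 _).symm (g *ᵥ u) := fun u => rfl
  have hinner : ∀ u w, (inner ℂ (F u) (F w) : ℂ) = star u ⬝ᵥ (PABC *ᵥ w) := by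
    intro u w
    rw [hFapply, hFapply, WithLp.equiv_symm_apply, EuclideanSpace.inner_toLp_toLp, dotProduct_comm,
      Matrix.star_mulVec,
      Matrix.dotProduct_mulVec, Matrix.vecMul_vecMul, hgherm.eq, hgg,
      ← Matrix.dotProduct_mulVec]
  have hnormsq : ∀ u, (‖F u‖ ^ 2 : ℝ) = (star u ⬝ᵥ (PABC *ᵥ u)).re := by
    intro u
    have h2 : RCLike.re (inner ℂ (F u) (F u) : ℂ) = ‖F u‖ ^ 2 := inner_self_eq_norm_sq _
    rw [hinner u u, RCLike.re_to_complex] at h2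
    exact h2.symm
  have hcontr : ∀ u, ‖F u‖ ^ 2 ≤ (star u ⬝ᵥ u).re := by
    intro u
    have h0 := hPi1.dotProduct_mulVec_nonneg u
    rw [Matrix.sub_mulVec, dotProduct_sub, Matrix.one_mulVec] at h0
    have h1 := (Complex.le_def.mp h0).1
    rw [Complex.zero_re, Complex.sub_re] at h1
    rw [hnormsq]
    linarith
  -- product vectors
  let est : Fin a → Fin a → (Fin a × Fin b × Fin c) → ℂ := fun s t q => x s q.1 * y t q.2
  have hon : ∀ i j, star (est i i) ⬝ᵥ est j j = if i = j then 1 else 0 := by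
    intro i j
    have h : star (est i i) ⬝ᵥ est j j
        = (∑ s, star (x i s) * x j s) * (∑ s, star (y i s) * y j s) := by
      simp only [dotProduct, Pi.star_apply, est, Fintype.sum_prod_type]
      rw [Finset.sum_mul_sum]
      refine Finset.sum_congr rfl fun q1 _ => Finset.sum_congr rfl fun q2 _ => ?_
      rw [Finset.mul_sum]
      exact Finset.sum_congr rfl fun q3 _ => by simp only [star_mul']; ring
    rw [h, hx, hy]
    split_ifs <;> simp
  have hdot : ∀ T : Finset (Fin a),
      star (∑ i ∈ T, ((Real.sqrt (p i) : ℝ) : ℂ) • est i i) ⬝ᵥ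
        (∑ i ∈ T, ((Real.sqrt (p i) : ℝ) : ℂ) • est i i) = ((∑ i ∈ T, p i : ℝ) : ℂ) := by
    intro T
    rw [dot_sum_ortho T (fun i => est i i) hon (fun i => Real.sqrt (p i))]
    norm_cast
    exact Finset.sum_congr rfl fun i _ => Real.sq_sqrt (hp0 i)
  -- the cutoff
  set δ : ℝ := (1 - ε) / (9 * a) with hδdef
  have hδpos : 0 < δ := by positivity
  set S : Finset (Fin a) := Finset.univ.filter fun i => δ ≤ p i with hSdef
  set ρS : (Fin a × Fin b × Fin c) → ℂ :=
    ∑ i ∈ S, ((Real.sqrt (p i) : ℝ) : ℂ) • est i i with hρSdef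
  set ρSc : (Fin a × Fin b × Fin c) → ℂ :=
    ∑ i ∈ Sᶜ, ((Real.sqrt (p i) : ℝ) : ℂ) • est i i with hρScdef
  have hsplit : ρvec = ρS + ρSc := by
    funext q
    rw [hρvec]
    have hs : ρS + ρSc = ∑ i, ((Real.sqrt (p i) : ℝ) : ℂ) • est i i :=
      Finset.sum_add_sum_compl S _
    rw [Pi.add_apply, ← Pi.add_apply ρS ρSc, hs, Finset.sum_apply]
    exact Finset.sum_congr rfl fun i _ => by
      simp only [Pi.smul_apply, smul_eq_mul, est, mul_assoc]
  have hρnormF : Real.sqrt (1 - ε) ≤ ‖F ρvec‖ := by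
    have h2 : 1 - ε ≤ ‖F ρvec‖ ^ 2 := by
      rw [hnormsq, ← trace_mul_outer]; exact hacc
    calc Real.sqrt (1 - ε) ≤ Real.sqrt (‖F ρvec‖ ^ 2) := Real.sqrt_le_sqrt h2
      _ = ‖F ρvec‖ := Real.sqrt_sq (norm_nonneg _)
  have h9 : Real.sqrt (9 : ℝ) = 3 := by
    rw [show (9:ℝ) = 3 ^ 2 by norm_num, Real.sqrt_sq (by norm_num)]
  have hScnorm : ‖F ρSc‖ ≤ Real.sqrt (1 - ε) / 3 := by
    have hsum : ∑ i ∈ Sᶜ, p i ≤ (1 - ε) / 9 := by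
      have hle : ∀ i ∈ Sᶜ, p i ≤ δ := by
        intro i hi
        rw [Finset.mem_compl, hSdef, Finset.mem_filter] at hi
        push_neg at hi
        exact le_of_lt (hi (Finset.mem_univ i))
      calc ∑ i ∈ Sᶜ, p i ≤ ∑ _i ∈ Sᶜ, δ := Finset.sum_le_sum hle
        _ = (Sᶜ.card : ℝ) * δ := by rw [Finset.sum_const, nsmul_eq_mul]
        _ ≤ (a : ℝ) * δ := by
            refine mul_le_mul_of_nonneg_right ?_ hδpos.le
            have hc : Sᶜ.card ≤ a := by simpa using Finset.card_le_univ Sᶜ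
            exact_mod_cast hc
        _ = (1 - ε) / 9 := by
            rw [hδdef]; field_simp
    have h2 : ‖F ρSc‖ ^ 2 ≤ (1 - ε) / 9 := by
      refine (hcontr ρSc).trans ?_
      rw [hρScdef, hdot Sᶜ, Complex.ofReal_re]
      exact hsum
    calc ‖F ρSc‖ = Real.sqrt (‖F ρSc‖ ^ 2) := (Real.sqrt_sq (norm_nonneg _)).symm
      _ ≤ Real.sqrt ((1 - ε) / 9) := Real.sqrt_le_sqrt h2
      _ = Real.sqrt (1 - ε) / 3 := by rw [Real.sqrt_div haK.le, h9]
  have hβ : 2 / 3 * Real.sqrt (1 - ε) ≤ ‖F ρS‖ := by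
    have htri : ‖F ρvec‖ ≤ ‖F ρS‖ + ‖F ρSc‖ := by
      rw [hsplit, map_add]; exact norm_add_le _ _
    linarith
  have htri2 : ‖F ρS‖ ≤ ∑ i ∈ S, Real.sqrt (p i) * ‖F (est i i)‖ := by
    have hFS : F ρS = ∑ i ∈ S, ((Real.sqrt (p i) : ℝ) : ℂ) • F (est i i) := by
      rw [hρSdef, map_sum]
      exact Finset.sum_congr rfl fun i _ => by rw [_root_.map_smul]
    rw [hFS]
    refine (norm_sum_le _ _).trans (Finset.sum_le_sum fun i _ => ?_)
    rw [norm_smul, Complex.norm_real, Real.norm_eq_abs, abs_of_nonneg (Real.sqrt_nonneg _)]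
  have hmemS : ∀ i ∈ S, δ ≤ p i := fun i hi => by
    rw [hSdef, Finset.mem_filter] at hi; exact hi.2
  have hCS : (∑ i ∈ S, Real.sqrt (p i) * ‖F (est i i)‖) ^ 2
      ≤ ((a : ℝ) / δ) * ∑ i ∈ S, (p i) ^ 2 * ‖F (est i i)‖ ^ 2 := by
    have h1 := Finset.sum_mul_sq_le_sq_mul_sq S (fun i => (Real.sqrt (p i))⁻¹)
      (fun i => p i * ‖F (est i i)‖)
    have e1 : ∀ i ∈ S, (Real.sqrt (p i))⁻¹ * (p i * ‖F (est i i)‖)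
        = Real.sqrt (p i) * ‖F (est i i)‖ := by
      intro i hi
      have hpi : 0 < p i := lt_of_lt_of_le hδpos (hmemS i hi)
      have hs : Real.sqrt (p i) ≠ 0 := ne_of_gt (Real.sqrt_pos.mpr hpi)
      calc (Real.sqrt (p i))⁻¹ * (p i * ‖F (est i i)‖)
          = (Real.sqrt (p i))⁻¹ * (Real.sqrt (p i) * Real.sqrt (p i) * ‖F (est i i)‖) := by
            rw [Real.mul_self_sqrt hpi.le]
        _ = ((Real.sqrt (p i))⁻¹ * Real.sqrt (p i)) * (Real.sqrt (p i) * ‖F (est i i)‖) := by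
            ring
        _ = Real.sqrt (p i) * ‖F (est i i)‖ := by rw [inv_mul_cancel₀ hs, one_mul]
    have e2 : ∀ i ∈ S, ((Real.sqrt (p i))⁻¹) ^ 2 = (p i)⁻¹ := by
      intro i _
      rw [inv_pow, Real.sq_sqrt (hp0 i)]
    have e3 : ∀ i ∈ S, (p i * ‖F (est i i)‖) ^ 2 = (p i) ^ 2 * ‖F (est i i)‖ ^ 2 :=
      fun i _ => mul_pow _ _ _
    rw [Finset.sum_congr rfl e1, Finset.sum_congr rfl e2, Finset.sum_congr rfl e3] at h1
    refine h1.trans ?_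
    refine mul_le_mul_of_nonneg_right ?_
      (Finset.sum_nonneg fun i _ => mul_nonneg (sq_nonneg _) (sq_nonneg _))
    calc ∑ i ∈ S, (p i)⁻¹ ≤ ∑ _i ∈ S, δ⁻¹ :=
          Finset.sum_le_sum fun i hi => inv_anti₀ hδpos (hmemS i hi)
      _ = (S.card : ℝ) * δ⁻¹ := by rw [Finset.sum_const, nsmul_eq_mul]
      _ ≤ (a : ℝ) * δ⁻¹ := by
          refine mul_le_mul_of_nonneg_right ?_ (inv_nonneg.mpr hδpos.le)
          have hc : S.card ≤ a := by simpa using Finset.card_le_univ S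
          exact_mod_cast hc
      _ = (a : ℝ) / δ := (div_eq_mul_inv _ _).symm
  -- trace decomposition for the product state
  have hQle : ∑ i ∈ S, (p i) ^ 2 * ‖F (est i i)‖ ^ 2 ≤ (Matrix.trace (PABC * τ)).re := by
    have hτ' : τ = ∑ s : Fin a, ∑ t : Fin a,
        ((p s * p t : ℝ) : ℂ) • outer (est s t) (est s t) := by
      ext q r
      simp only [Matrix.sum_apply, Matrix.smul_apply, hτ, hρA, hρBC, outer, smul_eq_mul]
      rw [Finset.sum_mul_sum]
      refine Finset.sum_congr rfl fun s _ => Finset.sum_congr rfl fun t _ => ?_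
      simp only [est, star_mul']
      push_cast
      ring
    rw [hτ']
    simp only [Matrix.mul_sum, Matrix.trace_sum, Matrix.mul_smul, Matrix.trace_smul,
      trace_mul_outer, smul_eq_mul]
    rw [Complex.re_sum]
    have hre : ∀ s : Fin a, (∑ t : Fin a,
        ((p s * p t : ℝ) : ℂ) * (star (est s t) ⬝ᵥ PABC *ᵥ est s t)).re
        = ∑ t : Fin a, (p s * p t) * ‖F (est s t)‖ ^ 2 := by
      intro s
      rw [Complex.re_sum]
      exact Finset.sum_congr rfl fun t _ => by rw [Complex.re_ofReal_mul, hnormsq]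
    rw [Finset.sum_congr rfl fun s _ => hre s]
    calc ∑ i ∈ S, (p i) ^ 2 * ‖F (est i i)‖ ^ 2
        ≤ ∑ i ∈ S, ∑ t : Fin a, (p i * p t) * ‖F (est i t)‖ ^ 2 := by
          refine Finset.sum_le_sum fun i _ => ?_
          have hs := Finset.single_le_sum
            (f := fun t => (p i * p t) * ‖F (est i t)‖ ^ 2)
            (fun t _ => mul_nonneg (mul_nonneg (hp0 i) (hp0 t)) (sq_nonneg _))
            (Finset.mem_univ i)
          calc (p i) ^ 2 * ‖F (est i i)‖ ^ 2
              = (p i * p i) * ‖F (est i i)‖ ^ 2 := by ring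
            _ ≤ _ := hs
      _ ≤ ∑ s : Fin a, ∑ t : Fin a, (p s * p t) * ‖F (est s t)‖ ^ 2 := by
          refine Finset.sum_le_sum_of_subset_of_nonneg (Finset.subset_univ S)
            fun s _ _ => Finset.sum_nonneg fun t _ =>
              mul_nonneg (mul_nonneg (hp0 s) (hp0 t)) (sq_nonneg _)
  -- final arithmetic
  set Q : ℝ := ∑ i ∈ S, (p i) ^ 2 * ‖F (est i i)‖ ^ 2 with hQdef
  have hQ0 : 0 ≤ Q := Finset.sum_nonneg fun i _ => mul_nonneg (sq_nonneg _) (sq_nonneg _)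
  have hZ : 2 / 3 * Real.sqrt (1 - ε) ≤ ∑ i ∈ S, Real.sqrt (p i) * ‖F (est i i)‖ :=
    le_trans hβ htri2
  have hZ2 : (2 / 3 * Real.sqrt (1 - ε)) ^ 2 ≤ ((a : ℝ) / δ) * Q :=
    le_trans (pow_le_pow_left₀ (by positivity) hZ 2) hCS
  have hsq : (Real.sqrt (1 - ε)) ^ 2 = 1 - ε := Real.sq_sqrt haK.le
  have h4 : 4 / 9 * (1 - ε) ≤ ((a : ℝ) / δ) * Q := by nlinarith [hZ2, hsq]
  have hQlb : 4 / 9 * (1 - ε) * (δ / (a : ℝ)) ≤ Q := by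
    have hmul := mul_le_mul_of_nonneg_right h4 (by positivity : (0:ℝ) ≤ δ / (a : ℝ))
    have heq : ((a : ℝ) / δ) * Q * (δ / (a : ℝ)) = Q := by
      field_simp
    linarith [heq ▸ hmul]
  have hfin : 2 ^ 4 * (1 - ε) ^ 3 / (3 ^ 6 * (a : ℝ) ^ 2)
      ≤ 4 / 9 * (1 - ε) * (δ / (a : ℝ)) := by
    rw [hδdef]
    rw [show 4 / 9 * (1 - ε) * ((1 - ε) / (9 * (a:ℝ)) / (a : ℝ))
        = 4 * (1 - ε) ^ 2 / (81 * (a:ℝ) ^ 2) by field_simp; ring]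
    rw [div_le_div_iff₀ (by positivity) (by positivity)]
    nlinarith [sq_nonneg ((1:ℝ) - ε), mul_pos haR haR, hε0,
      mul_nonneg (mul_nonneg (sq_nonneg ((1:ℝ) - ε)) hε0) (le_of_lt (mul_pos haR haR))]
  linarith [hQle, le_trans hfin hQlb]
end

section
/- Fix $0\le\epsilon<1$ and $0<\delta<1$. In the Schmidt decomposition $|\rho\rangle^{ABC} = \sum_a \sqrt{p_a}|x_a\rangle^A\otimes|y_a\rangle^{BC}$ with $\sum_a p_a = 1$, let $\hat{A}:=\{a : p_a \ge \delta(1-\epsilon)/|A|\}$ and let $\Pi$ be a positive semidefinite operator with $\Pi\le\mathbb{1}$ on $ABC$ satisfying $\|\Pi|\rho\rangle\|_2 \ge \sqrt{1-\epsilon}$. Then $\sum_{a\in\hat{A}} \|\Pi(|x_a\rangle\otimes|y_a\rangle)\|_2^2 > (1-\epsilon)(1-\sqrt{\delta})^2$. -/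
open Matrix Finset
open scoped ComplexOrder

private lemma sum_normSq_eq_re_dot {n : Type*} [Fintype n] (f : n → ℂ) :
    ∑ q, ‖f q‖^2 = Complex.re (star f ⬝ᵥ f) := by
  simp [dotProduct, RCLike.conj_mul, ← Complex.ofReal_pow]

open scoped MatrixOrder in
/-- If `0 ≤ P ≤ 1` then `P` is a contraction. -/
private lemma contraction {n : Type*} [Fintype n] [DecidableEq n]
    {P : Matrix n n ℂ} (hP : P.PosSemidef) (hP1 : (1 - P).PosSemidef) (w : n → ℂ) :
    ∑ q, ‖P.mulVec w q‖^2 ≤ ∑ q, ‖w q‖^2 := by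
  have hs : ((CFC.sqrt P)).PosSemidef := (CFC.sqrt_nonneg P).posSemidef
  have hsh : (CFC.sqrt P)ᴴ = (CFC.sqrt P) := hs.isHermitian
  have key : ((CFC.sqrt P) * (1 - P) * (CFC.sqrt P)ᴴ).PosSemidef :=
    hP1.mul_mul_conjTranspose_same (CFC.sqrt P)
  rw [hsh] at key
  have hcalc : (CFC.sqrt P) * (1 - P) * (CFC.sqrt P) = P - P * P := by
    have h1 : (CFC.sqrt P) * (CFC.sqrt P) = P := CFC.sqrt_mul_sqrt_self P hP.nonneg
    have h2 : (CFC.sqrt P) * P * (CFC.sqrt P) = P * P := by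
      calc (CFC.sqrt P) * P * (CFC.sqrt P)
          = (CFC.sqrt P) * ((CFC.sqrt P) * (CFC.sqrt P)) * (CFC.sqrt P) := by rw [h1]
        _ = ((CFC.sqrt P) * (CFC.sqrt P)) * ((CFC.sqrt P) * (CFC.sqrt P)) := by simp only [mul_assoc]
        _ = P * P := by rw [h1]
    rw [mul_sub, mul_one, sub_mul, h1, h2]
  rw [hcalc] at key
  have hfull : (1 - P * P).PosSemidef := by
    have := hP1.add key
    have he : (1 - P) + (P - P * P) = 1 - P * P := sub_add_sub_cancel 1 P (P * P)
    rwa [he] at this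
  have hre := hfull.re_dotProduct_nonneg w
  have hdot : star (P.mulVec w) ⬝ᵥ P.mulVec w = star w ⬝ᵥ (P * P).mulVec w := by
    rw [star_mulVec, hP.isHermitian]
    rw [← dotProduct_mulVec, mulVec_mulVec]
  rw [sum_normSq_eq_re_dot, sum_normSq_eq_re_dot, hdot]
  have hexp : star w ⬝ᵥ (1 - P * P).mulVec w
      = star w ⬝ᵥ w - star w ⬝ᵥ (P * P).mulVec w := by
    rw [sub_mulVec, dotProduct_sub, one_mulVec]
  rw [hexp] at hre
  have hre2 : 0 ≤ Complex.re (star w ⬝ᵥ w - star w ⬝ᵥ (P * P).mulVec w) := hre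
  rw [Complex.sub_re] at hre2
  linarith

/-- Intermediate estimate: restricting to the large-Schmidt-coefficient set
`Ahat = {a : p_a ≥ δ(1-ε)/|A|}`, the test `Π` retains most of its acceptance
amplitude: `∑_{a∈Ahat} ‖Π(|x_a⟩⊗|y_a⟩)‖² > (1-ε)(1-√δ)²`. -/
theorem stmt9 {a m : ℕ} (ε δ : ℝ) (hε0 : 0 ≤ ε) (hε1 : ε < 1)
    (hδ0 : 0 < δ) (hδ1 : δ < 1)
    (p : Fin a → ℝ) (hp0 : ∀ i, 0 ≤ p i) (hp1 : ∑ i, p i = 1)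
    (x : Fin a → Fin a → ℂ)
    (hx : ∀ i i', ∑ s, star (x i s) * x i' s = if i = i' then 1 else 0)
    (y : Fin a → Fin m → ℂ)
    (hy : ∀ i i', ∑ s, star (y i s) * y i' s = if i = i' then 1 else 0)
    (ρvec : (Fin a × Fin m) → ℂ)
    (hρvec : ∀ q, ρvec q = ∑ i, (Real.sqrt (p i) : ℂ) * x i q.1 * y i q.2)
    (P : Matrix (Fin a × Fin m) (Fin a × Fin m) ℂ)
    (hP : P.PosSemidef) (hP1 : (1 - P).PosSemidef)
    (hacc : Real.sqrt (1 - ε) ≤ Real.sqrt (∑ q, ‖P.mulVec ρvec q‖ ^ 2)) :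
    (1 - ε) * (1 - Real.sqrt δ) ^ 2 <
      ∑ i ∈ Finset.univ.filter (fun i => δ * (1 - ε) / (a : ℝ) ≤ p i),
        ∑ q, ‖P.mulVec (fun r => x i r.1 * y i r.2) q‖ ^ 2 := by
  classical
  have ha : 0 < a := by
    rcases Nat.eq_zero_or_pos a with h | h
    · subst h; simp at hp1
    · exact h
  have hε1' : (0:ℝ) < 1 - ε := by linarith
  -- notation
  set pred : Fin a → Prop := fun i => δ * (1 - ε) / (a : ℝ) ≤ p i with hpred
  set Ahat : Finset (Fin a) := Finset.univ.filter pred with hAhatdef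
  set c : Finset (Fin a) := Finset.univ.filter (fun i => ¬ pred i) with hcdef
  -- basic vectors
  set vf : Fin a → ((Fin a × Fin m) → ℂ) := fun i r => x i r.1 * y i r.2 with hvf
  let V : ((Fin a × Fin m) → ℂ) → EuclideanSpace ℂ (Fin a × Fin m) := fun f => WithLp.toLp 2 f
  have hVnorm : ∀ f, ‖V f‖ = Real.sqrt (∑ q, ‖f q‖^2) := fun f => EuclideanSpace.norm_eq (V f)
  let v : Fin a → EuclideanSpace ℂ (Fin a × Fin m) := fun i => V (vf i)
  have hvq : ∀ i q, v i q = vf i q := fun _ _ => rfl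
  -- orthonormality
  have hON : Orthonormal ℂ v := by
    rw [orthonormal_iff_ite]
    intro i j
    have hin : (inner ℂ (v i) (v j) : ℂ)
        = (∑ s, star (x i s) * x j s) * (∑ t, star (y i t) * y j t) := by
      simp only [PiLp.inner_apply, RCLike.inner_apply]
      rw [Fintype.sum_prod_type, Finset.sum_mul_sum]
      apply Finset.sum_congr rfl; intro s _
      apply Finset.sum_congr rfl; intro t _
      rw [hvq i (s, t), hvq j (s, t)]
      simp only [hvf, RCLike.star_def]
      simp only [_root_.map_mul]
      ring
    rw [hin, hx, hy]
    by_cases h : i = j <;> simp [h]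
  -- tail sum bound
  have hc_sum : ∑ i ∈ c, p i < δ * (1 - ε) := by
    have hbpos : 0 < δ * (1 - ε) := by positivity
    rcases Finset.eq_empty_or_nonempty c with hce | hcne
    · rw [hce]; simpa using hbpos
    · have hlt : ∑ i ∈ c, p i < ∑ i ∈ c, δ * (1 - ε) / (a : ℝ) := by
        apply Finset.sum_lt_sum_of_nonempty hcne
        intro i hi
        rw [hcdef, Finset.mem_filter] at hi
        exact lt_of_not_ge hi.2
      have hcard : (c.card : ℝ) ≤ (a : ℝ) := by
        exact_mod_cast le_trans (Finset.card_le_univ c) (by simp)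
      have : ∑ i ∈ c, δ * (1 - ε) / (a : ℝ) = (c.card : ℝ) * (δ * (1 - ε) / (a : ℝ)) := by
        rw [Finset.sum_const, nsmul_eq_mul]
      rw [this] at hlt
      have hstep : (c.card : ℝ) * (δ * (1 - ε) / (a : ℝ)) ≤ δ * (1 - ε) := by
        have hle : (c.card : ℝ) * (δ * (1 - ε) / (a : ℝ)) ≤ (a : ℝ) * (δ * (1 - ε) / (a : ℝ)) := by
          apply mul_le_mul_of_nonneg_right hcard
          positivity
        have hane : (a : ℝ) ≠ 0 := by positivity
        calc (c.card : ℝ) * (δ * (1 - ε) / (a : ℝ)) ≤ (a : ℝ) * (δ * (1 - ε) / (a : ℝ)) := hle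
          _ = δ * (1 - ε) := by field_simp
      linarith
  -- decomposition of ρvec
  have hρfun : ρvec = (∑ i ∈ Ahat, (Real.sqrt (p i) : ℂ) • vf i)
      + (∑ i ∈ c, (Real.sqrt (p i) : ℂ) • vf i) := by
    funext q
    rw [hρvec q]
    rw [← Finset.sum_filter_add_sum_filter_not Finset.univ pred]
    simp only [Pi.add_apply, Finset.sum_apply, Pi.smul_apply, smul_eq_mul, hvf]
    congr 1 <;> exact Finset.sum_congr rfl fun i _ => by ring
  set fA : (Fin a × Fin m) → ℂ := ∑ i ∈ Ahat, (Real.sqrt (p i) : ℂ) • vf i with hfA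
  set fc : (Fin a × Fin m) → ℂ := ∑ i ∈ c, (Real.sqrt (p i) : ℂ) • vf i with hfc
  -- tail norm
  have hVfc : V fc = ∑ i ∈ c, (Real.sqrt (p i) : ℂ) • v i := by
    simp only [V, v, hfc, WithLp.toLp_sum, WithLp.toLp_smul]
  have htail_sq : ‖V fc‖ ^ 2 = ∑ i ∈ c, p i := by
    rw [← inner_self_eq_norm_sq (𝕜 := ℂ) (V fc), hVfc, hON.inner_sum]
    have : ∑ i ∈ c, (starRingEnd ℂ) ((Real.sqrt (p i) : ℂ)) * (Real.sqrt (p i) : ℂ)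
        = ((∑ i ∈ c, p i : ℝ) : ℂ) := by
      push_cast
      apply Finset.sum_congr rfl
      intro i _
      rw [Complex.conj_ofReal, ← Complex.ofReal_mul,
        Real.mul_self_sqrt (hp0 i)]
    rw [this]; simp
  have htail_norm : ‖V fc‖ = Real.sqrt (∑ i ∈ c, p i) := by
    rw [← htail_sq, Real.sqrt_sq (norm_nonneg _)]
  have htail : ‖V fc‖ < Real.sqrt δ * Real.sqrt (1 - ε) := by
    rw [htail_norm, ← Real.sqrt_mul hδ0.le]
    apply Real.sqrt_lt_sqrt _ hc_sum
    exact Finset.sum_nonneg fun i _ => hp0 i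
  -- main quantity
  set S : ℝ := ∑ i ∈ Ahat, ∑ q, ‖P.mulVec (vf i) q‖ ^ 2 with hS
  have hS0 : 0 ≤ S := Finset.sum_nonneg fun i _ => Finset.sum_nonneg fun q _ => by positivity
  -- bound on head
  have hhead : ‖V (P.mulVec fA)‖ ≤ Real.sqrt S := by
    have h1 : V (P.mulVec fA) = ∑ i ∈ Ahat, (Real.sqrt (p i) : ℂ) • V (P.mulVec (vf i)) := by
      have : P.mulVec fA = ∑ i ∈ Ahat, (Real.sqrt (p i) : ℂ) • P.mulVec (vf i) := by
        rw [hfA, ← mulVecLin_apply, map_sum]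
        apply Finset.sum_congr rfl
        intro i _
        rw [LinearMap.map_smul, mulVecLin_apply]
      rw [this]
      simp only [V, WithLp.toLp_sum, WithLp.toLp_smul]
    have h2 : ‖V (P.mulVec fA)‖ ≤ ∑ i ∈ Ahat, Real.sqrt (p i) * ‖V (P.mulVec (vf i))‖ := by
      rw [h1]
      refine le_trans (norm_sum_le _ _) (le_of_eq ?_)
      apply Finset.sum_congr rfl
      intro i _
      rw [norm_smul]
      simp [Real.sqrt_nonneg]
    have h3 : (∑ i ∈ Ahat, Real.sqrt (p i) * ‖V (P.mulVec (vf i))‖) ^ 2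
        ≤ (∑ i ∈ Ahat, p i) * S := by
      have := Finset.sum_mul_sq_le_sq_mul_sq Ahat (fun i => Real.sqrt (p i))
        (fun i => ‖V (P.mulVec (vf i))‖)
      have e1 : ∑ i ∈ Ahat, Real.sqrt (p i) ^ 2 = ∑ i ∈ Ahat, p i := by
        apply Finset.sum_congr rfl
        intro i _; exact Real.sq_sqrt (hp0 i)
      have e2 : ∑ i ∈ Ahat, ‖V (P.mulVec (vf i))‖ ^ 2 = S := by
        apply Finset.sum_congr rfl
        intro i _
        rw [hVnorm, Real.sq_sqrt]
        exact Finset.sum_nonneg fun q _ => by positivity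
      rw [e1, e2] at this
      exact this
    have hpA : ∑ i ∈ Ahat, p i ≤ 1 := by
      rw [← hp1]
      exact Finset.sum_le_sum_of_subset_of_nonneg (Finset.subset_univ Ahat)
        (fun i _ _ => hp0 i)
    have h4 : (∑ i ∈ Ahat, Real.sqrt (p i) * ‖V (P.mulVec (vf i))‖) ^ 2 ≤ S := by
      calc _ ≤ (∑ i ∈ Ahat, p i) * S := h3
        _ ≤ 1 * S := by apply mul_le_mul_of_nonneg_right hpA hS0
        _ = S := one_mul S
    have h5 : ∑ i ∈ Ahat, Real.sqrt (p i) * ‖V (P.mulVec (vf i))‖ ≤ Real.sqrt S := by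
      have hnn : 0 ≤ ∑ i ∈ Ahat, Real.sqrt (p i) * ‖V (P.mulVec (vf i))‖ :=
        Finset.sum_nonneg fun i _ => mul_nonneg (Real.sqrt_nonneg _) (norm_nonneg _)
      nlinarith [Real.sq_sqrt hS0, Real.sqrt_nonneg S]
    exact le_trans h2 h5
  -- triangle inequality
  have hsplit : ‖V (P.mulVec ρvec)‖ ≤ ‖V (P.mulVec fA)‖ + ‖V (P.mulVec fc)‖ := by
    have : P.mulVec ρvec = P.mulVec fA + P.mulVec fc := by
      rw [hρfun, mulVec_add]
    rw [show V (P.mulVec ρvec) = V (P.mulVec fA) + V (P.mulVec fc) from congrArg V this]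
    exact norm_add_le _ _
  -- contraction on the tail
  have hBc : ‖V (P.mulVec fc)‖ ≤ ‖V fc‖ := by
    rw [hVnorm, hVnorm]
    exact Real.sqrt_le_sqrt (contraction hP hP1 fc)
  -- put it together
  have hacc' : Real.sqrt (1 - ε) ≤ ‖V (P.mulVec ρvec)‖ := by
    rw [hVnorm]; exact hacc
  have hmain : Real.sqrt (1 - ε) * (1 - Real.sqrt δ) < Real.sqrt S := by
    have : Real.sqrt (1 - ε) < Real.sqrt S + Real.sqrt δ * Real.sqrt (1 - ε) := by
      calc Real.sqrt (1 - ε) ≤ ‖V (P.mulVec fA)‖ + ‖V (P.mulVec fc)‖ :=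
            le_trans hacc' hsplit
        _ ≤ Real.sqrt S + ‖V fc‖ := add_le_add hhead hBc
        _ < Real.sqrt S + Real.sqrt δ * Real.sqrt (1 - ε) := by linarith
    nlinarith
  have hbase0 : 0 ≤ Real.sqrt (1 - ε) * (1 - Real.sqrt δ) := by
    apply mul_nonneg (Real.sqrt_nonneg _)
    have : Real.sqrt δ ≤ 1 := Real.sqrt_le_one.mpr hδ1.le
    linarith
  have hfinal : (Real.sqrt (1 - ε) * (1 - Real.sqrt δ)) ^ 2 < S := by
    calc (Real.sqrt (1 - ε) * (1 - Real.sqrt δ)) ^ 2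
        < Real.sqrt S ^ 2 := by
          apply pow_lt_pow_left₀ hmain hbase0
          norm_num
      _ = S := Real.sq_sqrt hS0
  calc (1 - ε) * (1 - Real.sqrt δ) ^ 2
      = (Real.sqrt (1 - ε) * (1 - Real.sqrt δ)) ^ 2 := by
        rw [mul_pow, Real.sq_sqrt hε1'.le]
    _ < S := hfinal
end

section
/- Let $c\ge 0$ and $k\ge 1$ be integers and let $T\subseteq [c]\mathbin{\dot\cup}[k]$ with $T\cap[k]\ne\emptyset$. Then: (1) the number of pseudosubpartitions of $T$ intersecting $[k]$ non-trivially is at most $2^{|T\cap[k]|\,|T\cap[c]|}(|T\cap[k]|+1)^{|T\cap[k]|}$; and (2) the number of such pseudosubpartitions with exactly $l$ blocks is at most $\frac{2^{l|T\cap[c]|}(l+1)^{|T\cap[k]|}}{l!}$. -/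
/-!
Label the blocks of a pseudosubpartition `P` of `T` injectively by a finite type `ι`. Then `P`
is recovered from its code: the `[c]`-part of the block with each label, and for each element
of `T ∩ [k]` the label of the block containing it, if any. There are
`2^{|ι||T∩[c]|} (|ι|+1)^{|T∩[k]|}` codes. Labelling every block by one of its `[k]`-elements
gives (1). A pseudosubpartition with `l` blocks has `l!` labellings by `Fin l`, with pairwise
distinct codes, which gives (2).
-/

open Finset

/-- `P` is a pseudosubpartition of `T ⊆ [c] ⊔ [k]` intersecting `[k]`
non-trivially: every block is a subset of `T` meeting `[k]` (the `Sum.inr`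
part), and distinct blocks have disjoint `[k]`-parts. -/
def IsPseudo {c k : ℕ} (T : Finset (Fin c ⊕ Fin k))
    (P : Finset (Finset (Fin c ⊕ Fin k))) : Prop :=
  (∀ S ∈ P, S ⊆ T ∧ ∃ s ∈ S, s.isRight = true) ∧
  ∀ S ∈ P, ∀ S' ∈ P, S ≠ S' → ∀ s, s ∈ S → s ∈ S' → s.isRight = false

open Function

theorem card_subtype_mul_le_of_le_card_fiber {γ δ : Type*} [Fintype γ] [Fintype δ]
    [DecidableEq δ] (f : γ → δ) (p : δ → Prop) (N : ℕ)
    (h : ∀ d, p d → N ≤ #{x | f x = d}) : Nat.card {d // p d} * N ≤ Fintype.card γ := by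
  classical
  rw [Nat.card_eq_fintype_card, Fintype.card_subtype, ← card_univ (α := γ), ← mul_one #univ]
  refine card_mul_le_card_mul (fun d x => f x = d) (fun d hd => ?_) fun x _ => ?_
  · simpa [bipartiteAbove] using h d (mem_filter.mp hd).2
  · exact card_le_one.mpr fun a ha b hb => by
      simp only [bipartiteBelow, mem_filter] at ha hb
      rw [← ha.2, hb.2]

variable {c k : ℕ} {T : Finset (Fin c ⊕ Fin k)} {P : Finset (Finset (Fin c ⊕ Fin k))}

abbrev LeftPart (T : Finset (Fin c ⊕ Fin k)) := {y // y ∈ T.filter fun s => s.isLeft = true}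

abbrev RightPart (T : Finset (Fin c ⊕ Fin k)) := {y // y ∈ T.filter fun s => s.isRight = true}

lemma map_subtype_union_map_subtype {S : Finset (Fin c ⊕ Fin k)} (hS : S ⊆ T) :
    (S.subtype (· ∈ T.filter fun s => s.isLeft = true)).map (Embedding.subtype _) ∪
      (S.subtype (· ∈ T.filter fun s => s.isRight = true)).map (Embedding.subtype _) = S := by
  ext s
  simp only [subtype_map, mem_union, mem_filter]
  have := @hS s
  rcases s with a | b <;> simp <;> tauto

lemma IsPseudo.eq_of_mem_of_mem (hP : IsPseudo T P) {S S' : Finset (Fin c ⊕ Fin k)}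
    (hS : S ∈ P) (hS' : S' ∈ P) {x : Fin c ⊕ Fin k} (hx : x.isRight = true)
    (h : x ∈ S) (h' : x ∈ S') : S = S' := by
  by_contra hne
  simpa [hx] using hP.2 S hS S' hS' hne x h h'

open Classical in
noncomputable def blockOf {α : Type*} (P : Finset (Finset α)) (x : α) : Option {S // S ∈ P} :=
  if h : ∃ S ∈ P, x ∈ S then some ⟨h.choose, h.choose_spec.1⟩ else none

lemma IsPseudo.blockOf_eq_some_iff (hP : IsPseudo T P) {x : Fin c ⊕ Fin k}
    (hx : x.isRight = true) (S : {S // S ∈ P}) : blockOf P x = some S ↔ x ∈ S.1 := by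
  unfold blockOf
  split_ifs with h
  · rw [Option.some_inj, ← Subtype.coe_inj]
    exact ⟨fun h' => h' ▸ h.choose_spec.2,
      fun hxS => hP.eq_of_mem_of_mem h.choose_spec.1 S.2 hx h.choose_spec.2 hxS⟩
  · exact ⟨nofun, fun hxS => (h ⟨S, S.2, hxS⟩).elim⟩

abbrev Code (T : Finset (Fin c ⊕ Fin k)) (ι : Type*) :=
  (ι → Finset (LeftPart T)) × (RightPart T → Option ι)

namespace Code

lemma card_eq (T : Finset (Fin c ⊕ Fin k)) (ι : Type*) [Fintype ι] [DecidableEq ι] :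
    Fintype.card (Code T ι) =
      2 ^ (Fintype.card ι * #(T.filter fun s => s.isLeft = true)) *
        (Fintype.card ι + 1) ^ #(T.filter fun s => s.isRight = true) := by
  simp [pow_mul']

variable {ι : Type*} [DecidableEq ι]

def block (C : Code T ι) (i : ι) : Finset (Fin c ⊕ Fin k) :=
  (C.1 i).map (Embedding.subtype _) ∪ ({x | C.2 x = some i} : Finset _).map (Embedding.subtype _)

variable [Fintype ι]

def decode (C : Code T ι) : Finset (Finset (Fin c ⊕ Fin k)) :=
  ({i | ∃ x, C.2 x = some i} : Finset _).image C.block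

end Code

noncomputable def encode {ι : Type*} (T : Finset (Fin c ⊕ Fin k))
    (P : Finset (Finset (Fin c ⊕ Fin k))) (lab : {S // S ∈ P} → ι) : Code T ι :=
  (extend lab (fun S => S.1.subtype (· ∈ T.filter fun s => s.isLeft = true)) fun _ => ∅,
    fun x => (blockOf P x.1).map lab)

section encode

variable {ι : Type*} {lab : {S // S ∈ P} → ι}

lemma IsPseudo.encode_snd_eq_some (hP : IsPseudo T P) (S : {S // S ∈ P}) {x : RightPart T}
    (hx : x.1 ∈ S.1) : (encode T P lab).2 x = some (lab S) := by
  simp [encode, (hP.blockOf_eq_some_iff (mem_filter.mp x.2).2 S).mpr hx]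

lemma IsPseudo.encode_snd_eq_some_iff (hP : IsPseudo T P) (hlab : Injective lab)
    (S : {S // S ∈ P}) (x : RightPart T) :
    (encode T P lab).2 x = some (lab S) ↔ x.1 ∈ S.1 := by
  rw [← hP.blockOf_eq_some_iff (mem_filter.mp x.2).2, encode, ← Option.map_some,
    (Option.map_injective hlab).eq_iff]

lemma IsPseudo.exists_mem_rightPart (hP : IsPseudo T P) (S : {S // S ∈ P}) :
    ∃ x : RightPart T, x.1 ∈ S.1 := by
  obtain ⟨hST, s, hs, hsR⟩ := hP.1 S S.2
  exact ⟨⟨s, mem_filter.mpr ⟨hST hs, hsR⟩⟩, hs⟩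

variable [DecidableEq ι]

lemma IsPseudo.block_encode (hP : IsPseudo T P) (hlab : Injective lab) (S : {S // S ∈ P}) :
    (encode T P lab).block (lab S) = S.1 := by
  have hright : ({x | (encode T P lab).2 x = some (lab S)} : Finset (RightPart T)) =
      S.1.subtype (· ∈ T.filter fun s => s.isRight = true) := by
    ext x
    simp [hP.encode_snd_eq_some_iff hlab]
  rw [Code.block, hright]
  dsimp only [encode]
  rw [hlab.extend_apply]
  exact map_subtype_union_map_subtype (hP.1 S S.2).1

variable [Fintype ι]

lemma IsPseudo.decode_encode (hP : IsPseudo T P) (hlab : Injective lab) :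
    (encode T P lab).decode = P := by
  ext S
  simp only [Code.decode, mem_image, mem_filter, mem_univ, true_and]
  constructor
  · rintro ⟨i, ⟨x, hx⟩, rfl⟩
    obtain ⟨S', -, rfl⟩ := Option.map_eq_some_iff.mp hx
    rw [hP.block_encode hlab]
    exact S'.2
  · intro hS
    obtain ⟨x, hx⟩ := hP.exists_mem_rightPart ⟨S, hS⟩
    exact ⟨lab ⟨S, hS⟩, ⟨x, hP.encode_snd_eq_some _ hx⟩,
      hP.block_encode hlab ⟨S, hS⟩⟩

end encode

lemma IsPseudo.exists_injective_rightPart (hP : IsPseudo T P) :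
    ∃ lab : {S // S ∈ P} → RightPart T, Injective lab := by
  choose lab hlab using hP.exists_mem_rightPart
  refine ⟨lab, fun S S' h => Subtype.ext ?_⟩
  exact hP.eq_of_mem_of_mem S.2 S'.2 (mem_filter.mp (lab S).2).2 (hlab S) (h ▸ hlab S')

lemma IsPseudo.encode_injective (hP : IsPseudo T P) {ι : Type*} :
    Injective (encode T P : ({S // S ∈ P} → ι) → Code T ι) := by
  intro lab lab' h
  funext S
  obtain ⟨x, hx⟩ := hP.exists_mem_rightPart S
  have := congrArg (·.2 x) h
  simpa [hP.encode_snd_eq_some S hx] using this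

lemma IsPseudo.one_le_card_decode_eq (hP : IsPseudo T P) :
    1 ≤ #{C : Code T (RightPart T) | C.decode = P} := by
  obtain ⟨lab, hlab⟩ := hP.exists_injective_rightPart
  exact one_le_card.mpr ⟨encode T P lab, mem_filter.mpr ⟨mem_univ _, hP.decode_encode hlab⟩⟩

lemma IsPseudo.factorial_le_card_decode_eq (hP : IsPseudo T P) {l : ℕ} (hl : #P = l) :
    l.factorial ≤ #{C : Code T (Fin l) | C.decode = P} := by
  classical
  have e : {S // S ∈ P} ≃ Fin l := Fintype.equivFinOfCardEq (by simpa using hl)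
  calc l.factorial = #(univ : Finset ({S // S ∈ P} ≃ Fin l)) := by
        rw [card_univ, Fintype.card_equiv e, Fintype.card_coe, hl]
    _ ≤ _ := card_le_card_of_injOn (fun e => encode T P e)
        (fun e _ => mem_filter.mpr ⟨mem_univ _, hP.decode_encode e.injective⟩)
        fun e _ e' _ h => Equiv.coe_fn_injective (hP.encode_injective h)

theorem card_isPseudo_le (T : Finset (Fin c ⊕ Fin k)) :
    Nat.card {P // IsPseudo T P} ≤
      2 ^ (#(T.filter fun s => s.isRight = true) * #(T.filter fun s => s.isLeft = true)) *
        (#(T.filter fun s => s.isRight = true) + 1) ^ #(T.filter fun s => s.isRight = true) := by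
  have h := card_subtype_mul_le_of_le_card_fiber (Code.decode : Code T (RightPart T) → _)
    (IsPseudo T) 1 fun _ hP => hP.one_le_card_decode_eq
  rwa [mul_one, Code.card_eq, Fintype.card_coe] at h

theorem card_isPseudo_card_eq_mul_factorial_le (T : Finset (Fin c ⊕ Fin k)) (l : ℕ) :
    Nat.card {P // IsPseudo T P ∧ #P = l} * l.factorial ≤
      2 ^ (l * #(T.filter fun s => s.isLeft = true)) *
        (l + 1) ^ #(T.filter fun s => s.isRight = true) := by
  have h := card_subtype_mul_le_of_le_card_fiber (Code.decode : Code T (Fin l) → _)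
    (fun P => IsPseudo T P ∧ #P = l) l.factorial fun _ hP => hP.1.factorial_le_card_decode_eq hP.2
  rwa [Code.card_eq, Fintype.card_fin] at h

theorem stmt12_general (c k : ℕ) (T : Finset (Fin c ⊕ Fin k)) :
    (Nat.card {P : Finset (Finset (Fin c ⊕ Fin k)) // IsPseudo T P} ≤
      2 ^ ((T.filter (fun s => s.isRight = true)).card *
            (T.filter (fun s => s.isLeft = true)).card) *
        ((T.filter (fun s => s.isRight = true)).card + 1) ^
          (T.filter (fun s => s.isRight = true)).card) ∧
    ∀ l : ℕ,
      ((Nat.card {P : Finset (Finset (Fin c ⊕ Fin k)) //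
          IsPseudo T P ∧ P.card = l} : ℝ) ≤
        2 ^ (l * (T.filter (fun s => s.isLeft = true)).card) *
          ((l : ℝ) + 1) ^ (T.filter (fun s => s.isRight = true)).card /
            (Nat.factorial l : ℝ)) := by
  refine ⟨card_isPseudo_le T, fun l => ?_⟩
  rw [le_div_iff₀ (by positivity)]
  exact_mod_cast card_isPseudo_card_eq_mul_factorial_le T l

/-- Counting pseudosubpartitions of `T`:
(1) there are at most `2^{|T∩[k]||T∩[c]|}(|T∩[k]|+1)^{|T∩[k]|}` of them;
(2) at most `2^{l|T∩[c]|}(l+1)^{|T∩[k]|}/l!` with exactly `l` blocks. -/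
theorem stmt12 (c k : ℕ) (hk : 0 < k) (T : Finset (Fin c ⊕ Fin k))
    (hT : ∃ s ∈ T, s.isRight = true) :
    (Nat.card {P : Finset (Finset (Fin c ⊕ Fin k)) // IsPseudo T P} ≤
      2 ^ ((T.filter (fun s => s.isRight = true)).card *
            (T.filter (fun s => s.isLeft = true)).card) *
        ((T.filter (fun s => s.isRight = true)).card + 1) ^
          (T.filter (fun s => s.isRight = true)).card) ∧
    ∀ l : ℕ,
      ((Nat.card {P : Finset (Finset (Fin c ⊕ Fin k)) //
          IsPseudo T P ∧ P.card = l} : ℝ) ≤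
        2 ^ (l * (T.filter (fun s => s.isLeft = true)).card) *
          ((l : ℝ) + 1) ^ (T.filter (fun s => s.isRight = true)).card /
            (Nat.factorial l : ℝ)) :=
  stmt12_general c k T
end

section
/- Let $\mathcal{L}$ be a finite-dimensional Hilbert space with orthonormal computational basis $\{|l\rangle\}$, let $\hat{\mathcal{Z}}$ be a Hilbert space, and let $0\le\delta\le 1$. For a fixed basis vector $|l_x\rangle$ of a copy $\mathcal{L}^X$ of $\mathcal{L}$ and a unit vector $|h\rangle\in\hat{\mathcal{Z}}$, define $N_{X;l_x,\delta}(|h\rangle\langle h|) := \frac{|\mathcal{L}|^{-1}}{1+2\delta^2}\sum_{l_y}\big(\delta(|h\rangle + \delta|h\rangle|l_x\rangle)\langle h|\langle l_y| + \delta|h\rangle|l_y\rangle(\langle h| + \delta\langle h|\langle l_x|) + \delta^2 |h\rangle\langle h|\otimes|l_y\rangle\langle l_y|\big)$, where $l_y$ ranges over all $|\mathcal{L}|$ computational basis vectors of a copy $\mathcal{L}^Y$ of $\mathcal{L}$ orthogonal to $\mathcal{L}^X$. Then $\|N_{X;l_x,\delta}(|h\rangle\langle h|)\|_{\infty} \le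 \frac{3\delta}{\sqrt{|\mathcal{L}|}}$. -/
open Matrix Finset

/-- The extended space `Z' = Ẑ ⊕ (Ẑ⊗L^X) ⊕ (Ẑ⊗L^Y)` (index type). -/
abbrev Zext (z m : ℕ) : Type := Fin z ⊕ ((Fin z × Fin m) ⊕ (Fin z × Fin m))

/-- `h` viewed in the first summand `Ẑ` of `Z'`. -/
def e0 {z m : ℕ} (h : Fin z → ℂ) : Zext z m → ℂ :=
  Sum.elim h (Sum.elim 0 0)

/-- `h ⊗ |l_x⟩` in the summand `Ẑ⊗L^X` of `Z'`. -/
def eX {z m : ℕ} (h : Fin z → ℂ) (lx : Fin m) : Zext z m → ℂ :=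
  Sum.elim 0 (Sum.elim (fun p => h p.1 * (if p.2 = lx then 1 else 0)) 0)

/-- `h ⊗ |l_y⟩` in the summand `Ẑ⊗L^Y` of `Z'`. -/
def eY {z m : ℕ} (h : Fin z → ℂ) (ly : Fin m) : Zext z m → ℂ :=
  Sum.elim 0 (Sum.elim 0 (fun p => h p.1 * (if p.2 = ly then 1 else 0)))

/-! Write `u = h + δ h⊗|l_x⟩` and `s = ∑_{l_y} h⊗|l_y⟩`. Summing over `l_y` turns the operator
into `c (δ |u⟩⟨s| + δ |s⟩⟨u| + δ² P)` with `c = (|L| (1 + 2δ²))⁻¹`. The vectors `h⊗|l_y⟩` are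
orthonormal, so `P = ∑ |h⊗l_y⟩⟨h⊗l_y|` is an orthogonal projection, of norm at most `1`, and
`‖s‖ = √|L|`. Rank-one operators have norm `‖u‖‖s‖ ≤ (1 + δ)√|L|`, hence the norm is at most
`c (2δ(1 + δ)√|L| + δ²) ≤ 3δ/√|L|`. -/

open scoped Matrix.Norms.L2Operator InnerProductSpace
open InnerProductSpace (rankOne)
open WithLp (toLp)

section Orthonormal

variable {𝕜 E κ : Type*} [RCLike 𝕜] [NormedAddCommGroup E] [InnerProductSpace 𝕜 E] [Fintype κ]
  {e : κ → E}

lemma Orthonormal.norm_sum_inner_smul_le (he : Orthonormal 𝕜 e) (x : E) :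
    ‖∑ k, ⟪e k, x⟫_𝕜 • e k‖ ≤ ‖x‖ := by
  set y := ∑ k, ⟪e k, x⟫_𝕜 • e k
  have hyy : ⟪y, y⟫_𝕜 = ⟪y, x⟫_𝕜 := by
    simp only [y, sum_inner, inner_smul_left, he.inner_right_fintype]
  have : ‖y‖ ^ 2 ≤ ‖y‖ * ‖x‖ := by
    rw [← @inner_self_eq_norm_sq 𝕜, hyy]
    exact (RCLike.re_le_norm _).trans (norm_inner_le_norm y x)
  nlinarith [norm_nonneg y, norm_nonneg x]

lemma Orthonormal.norm_sum (he : Orthonormal 𝕜 e) : ‖∑ k, e k‖ = Real.sqrt (Fintype.card κ) := by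
  have := he.inner_sum (fun _ => 1) (fun _ => 1) Finset.univ
  simp only [one_smul, map_one, mul_one, Finset.sum_const, Finset.card_univ, nsmul_eq_mul] at this
  rw [eq_comm, Real.sqrt_eq_iff_eq_sq (by positivity) (norm_nonneg _),
    ← @inner_self_eq_norm_sq 𝕜, this]
  simp

end Orthonormal

lemma norm_eq_norm_of_inner_self_eq {𝕜 E F : Type*} [RCLike 𝕜] [NormedAddCommGroup E]
    [InnerProductSpace 𝕜 E] [NormedAddCommGroup F] [InnerProductSpace 𝕜 F] {x : E} {y : F}
    (h : ⟪x, x⟫_𝕜 = ⟪y, y⟫_𝕜) : ‖x‖ = ‖y‖ := by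
  rw [inner_self_eq_norm_sq_to_K, inner_self_eq_norm_sq_to_K] at h
  exact_mod_cast (pow_left_inj₀ (norm_nonneg x) (norm_nonneg y) two_ne_zero).1 (by exact_mod_cast h)

section Outer

variable {ι κ : Type*}

lemma sum_outer_left (s : Finset κ) (u : κ → ι → ℂ) (v : ι → ℂ) :
    ∑ k ∈ s, outer (u k) v = outer (∑ k ∈ s, u k) v := by
  ext p q
  simp [outer, Matrix.sum_apply, Finset.sum_mul]

lemma sum_outer_right (s : Finset κ) (u : ι → ℂ) (v : κ → ι → ℂ) :
    ∑ k ∈ s, outer u (v k) = outer u (∑ k ∈ s, v k) := by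
  ext p q
  simp [outer, Matrix.sum_apply, Finset.mul_sum]

variable [Fintype ι]

lemma sqrt_sum_norm_sq_eq_norm_toLp (f : ι → ℂ) :
    Real.sqrt (∑ p, ‖f p‖ ^ 2) = ‖toLp 2 f‖ :=
  (EuclideanSpace.norm_eq _).symm

variable [DecidableEq ι]

lemma outer_eq_toEuclideanLin_symm_rankOne (u v : ι → ℂ) :
    outer u v = toEuclideanLin.symm (rankOne ℂ (toLp 2 u) (toLp 2 v)) :=
  (InnerProductSpace.symm_toEuclideanLin_rankOne _ _).symm

lemma l2_opNorm_outer (u v : ι → ℂ) : ‖outer u v‖ = ‖toLp 2 u‖ * ‖toLp 2 v‖ := by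
  rw [outer_eq_toEuclideanLin_symm_rankOne, l2_opNorm_def, LinearEquiv.trans_apply,
    LinearEquiv.apply_symm_apply, ← InnerProductSpace.norm_rankOne (𝕜 := ℂ)]
  rfl

variable [Fintype κ]

lemma l2_opNorm_sum_outer_self_le {e : κ → ι → ℂ} (he : Orthonormal ℂ fun k => toLp 2 (e k)) :
    ‖∑ k, outer (e k) (e k)‖ ≤ 1 := by
  simp_rw [outer_eq_toEuclideanLin_symm_rankOne, ← map_sum, ← ContinuousLinearMap.toLinearMap_sum]
  rw [l2_opNorm_def, LinearEquiv.trans_apply, LinearEquiv.apply_symm_apply]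
  refine ContinuousLinearMap.opNorm_le_bound _ zero_le_one fun x => ?_
  simpa using he.norm_sum_inner_smul_le x

lemma l2_opNorm_outer_add_outer_add_sum_le {δ : ℝ} (hδ : 0 ≤ δ) (u s : ι → ℂ) {e : κ → ι → ℂ}
    (he : Orthonormal ℂ fun k => toLp 2 (e k)) :
    ‖(δ : ℂ) • outer u s + (δ : ℂ) • outer s u + (δ : ℂ) ^ 2 • ∑ k, outer (e k) (e k)‖ ≤
      2 * δ * (‖toLp 2 u‖ * ‖toLp 2 s‖) + δ ^ 2 := by
  grw [norm_add₃_le, norm_smul, norm_smul, norm_smul, l2_opNorm_outer, l2_opNorm_outer,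
    l2_opNorm_sum_outer_self_le he, norm_pow, Complex.norm_of_nonneg hδ]
  linarith

end Outer

section InnerToLp

variable {ι κ : Type*} [Fintype ι] [Fintype κ]

lemma inner_toLp_sumElim (x x' : ι → ℂ) (y y' : κ → ℂ) :
    ⟪toLp 2 (Sum.elim x y), toLp 2 (Sum.elim x' y')⟫_ℂ =
      ⟪toLp 2 x, toLp 2 x'⟫_ℂ + ⟪toLp 2 y, toLp 2 y'⟫_ℂ := by
  simp only [EuclideanSpace.inner_eq_star_dotProduct, Function.star_sumElim,
    sumElim_dotProduct_sumElim]

lemma inner_toLp_mul_ite [DecidableEq κ] (f g : ι → ℂ) (a b : κ) :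
    ⟪toLp 2 (fun p : ι × κ => f p.1 * if p.2 = a then 1 else 0),
      toLp 2 (fun p : ι × κ => g p.1 * if p.2 = b then 1 else 0)⟫_ℂ =
      if a = b then ⟪toLp 2 f, toLp 2 g⟫_ℂ else 0 := by
  simp only [EuclideanSpace.inner_eq_star_dotProduct, dotProduct, Fintype.sum_prod_type_right]
  split_ifs with hab
  · subst hab
    simp
  · simp [Ne.symm hab]

end InnerToLp

section Zext

variable {z m : ℕ} (h : Fin z → ℂ)

lemma norm_toLp_e0 : ‖toLp 2 (e0 (m := m) h)‖ = ‖toLp 2 h‖ :=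
  norm_eq_norm_of_inner_self_eq (𝕜 := ℂ)
    (by simp only [e0, inner_toLp_sumElim, WithLp.toLp_zero, inner_zero_left, add_zero])

lemma norm_toLp_eX (lx : Fin m) : ‖toLp 2 (eX h lx)‖ = ‖toLp 2 h‖ :=
  norm_eq_norm_of_inner_self_eq (𝕜 := ℂ) (by
    simp only [eX, inner_toLp_sumElim, inner_toLp_mul_ite, if_pos, WithLp.toLp_zero,
      inner_zero_left, add_zero, zero_add])

lemma norm_toLp_e0_add_smul_eX_le {δ : ℝ} (hδ : 0 ≤ δ) (lx : Fin m) :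
    ‖toLp 2 (fun p => e0 h p + (δ : ℂ) * eX h lx p)‖ ≤ (1 + δ) * ‖toLp 2 h‖ := by
  have : toLp 2 (fun p => e0 h p + (δ : ℂ) * eX h lx p) =
      toLp 2 (e0 h) + (δ : ℂ) • toLp 2 (eX h lx) := rfl
  grw [this, norm_add_le, norm_smul, norm_toLp_e0, norm_toLp_eX, Complex.norm_of_nonneg hδ]
  linarith

variable {h}

lemma orthonormal_eY (hh : ‖toLp 2 h‖ = 1) : Orthonormal ℂ fun l : Fin m => toLp 2 (eY h l) := by
  rw [orthonormal_iff_ite]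
  intro a b
  simp only [eY, inner_toLp_sumElim, inner_toLp_mul_ite, inner_self_eq_one_of_norm_eq_one hh,
    WithLp.toLp_zero, inner_zero_left, zero_add]

lemma norm_toLp_sum_eY (hh : ‖toLp 2 h‖ = 1) : ‖toLp 2 (∑ l : Fin m, eY h l)‖ = Real.sqrt m := by
  simpa using (orthonormal_eY hh).norm_sum

end Zext

lemma inv_mul_le_three_mul_div_sqrt {δ m : ℝ} (hδ : 0 ≤ δ) (hm : 1 ≤ m) :
    (m * (1 + 2 * δ ^ 2))⁻¹ * (2 * δ * ((1 + δ) * Real.sqrt m) + δ ^ 2) ≤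
      3 * δ / Real.sqrt m := by
  have hr : 1 ≤ Real.sqrt m := Real.one_le_sqrt.2 hm
  nth_rw 1 [← Real.sq_sqrt (zero_le_one.trans hm)]
  rw [← div_eq_inv_mul, div_le_div_iff₀ (by positivity) (by positivity)]
  nlinarith [sq_nonneg (δ - 1 / 4), mul_nonneg hδ (sub_nonneg.2 hr),
    mul_nonneg (mul_nonneg hδ hδ) (sub_nonneg.2 hr)]

theorem stmt16_general {z m : ℕ} (δ : ℝ) (hδ0 : 0 ≤ δ)
    (h : Fin z → ℂ) (hh : ∑ i, ‖h i‖ ^ 2 = 1) (lx : Fin m)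
    (N : Matrix (Zext z m) (Zext z m) ℂ)
    (hN : N = (((m : ℂ))⁻¹ * ((1 : ℂ) + 2 * (δ : ℂ) ^ 2)⁻¹) •
      ∑ ly : Fin m,
        ((δ : ℂ) • outer (fun p => e0 h p + (δ : ℂ) * eX h lx p) (eY h ly)
          + (δ : ℂ) • outer (eY h ly) (fun p => e0 h p + (δ : ℂ) * eX h lx p)
          + ((δ : ℂ) ^ 2) • outer (eY h ly) (eY h ly))) :
    ∀ v : Zext z m → ℂ,
      Real.sqrt (∑ p, ‖N.mulVec v p‖ ^ 2) ≤
        3 * δ / Real.sqrt m * Real.sqrt (∑ p, ‖v p‖ ^ 2) := by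
  intro v
  replace hh : ‖toLp 2 h‖ = 1 := by rw [← sqrt_sum_norm_sq_eq_norm_toLp, hh, Real.sqrt_one]
  have hc : ‖((m : ℂ))⁻¹ * ((1 : ℂ) + 2 * (δ : ℂ) ^ 2)⁻¹‖ = ((m : ℝ) * (1 + 2 * δ ^ 2))⁻¹ := by
    have : (1 : ℂ) + 2 * (δ : ℂ) ^ 2 = ((1 + 2 * δ ^ 2 : ℝ) : ℂ) := by push_cast; rfl
    rw [this, norm_mul, norm_inv, norm_inv, Complex.norm_natCast,
      Complex.norm_of_nonneg (by positivity), mul_inv]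
  have hNorm : ‖N‖ ≤ 3 * δ / Real.sqrt m := by
    rw [hN, Finset.sum_add_distrib, Finset.sum_add_distrib, ← Finset.smul_sum, ← Finset.smul_sum,
      ← Finset.smul_sum, sum_outer_left, sum_outer_right, norm_smul, hc]
    grw [l2_opNorm_outer_add_outer_add_sum_le hδ0 _ _ (orthonormal_eY hh),
      norm_toLp_e0_add_smul_eX_le h hδ0, hh, mul_one, norm_toLp_sum_eY hh]
    exact inv_mul_le_three_mul_div_sqrt hδ0 (by exact_mod_cast lx.pos)
  rw [sqrt_sum_norm_sq_eq_norm_toLp, sqrt_sum_norm_sq_eq_norm_toLp]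
  exact (l2_opNorm_mulVec N (toLp 2 v)).trans (by gcongr)

/-- The operator-norm bound `‖N_{X;l_x,δ}(|h⟩⟨h|)‖_∞ ≤ 3δ/√|L|`, stated as the
bound `‖N v‖₂ ≤ (3δ/√|L|)‖v‖₂` for all vectors `v`. -/
theorem stmt16 {z m : ℕ} (δ : ℝ) (hδ0 : 0 ≤ δ) (hδ1 : δ ≤ 1)
    (h : Fin z → ℂ) (hh : ∑ i, ‖h i‖ ^ 2 = 1) (lx : Fin m)
    (N : Matrix (Zext z m) (Zext z m) ℂ)
    (hN : N = (((m : ℂ))⁻¹ * ((1 : ℂ) + 2 * (δ : ℂ) ^ 2)⁻¹) •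
      ∑ ly : Fin m,
        ((δ : ℂ) • outer (fun p => e0 h p + (δ : ℂ) * eX h lx p) (eY h ly)
          + (δ : ℂ) • outer (eY h ly) (fun p => e0 h p + (δ : ℂ) * eX h lx p)
          + ((δ : ℂ) ^ 2) • outer (eY h ly) (eY h ly))) :
    ∀ v : Zext z m → ℂ,
      Real.sqrt (∑ p, ‖N.mulVec v p‖ ^ 2) ≤
        3 * δ / Real.sqrt m * Real.sqrt (∑ p, ‖v p‖ ^ 2) :=
  stmt16_general δ hδ0 h hh lx N hN
end
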